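/- arXiv:1810.02103 — 5 statements merged into one kernel-verified Lean document; each statement's English description precedes it below -/
import Mathlib

section
/- The total order ≺ on the positive roots Φ⁺ of type D_n defined by (a) ε_i+ε_j ≺ ε_k−ε_l, (b) ε_i+ε_j ≺ ε_k+ε_l iff (j > l) or (j = l and i > k), (c) ε_i−ε_j ≺ ε_k−ε_l iff (i < k) or (i = k and j < l), is convex: whenever γ, γ′, γ″ ∈ Φ⁺ satisfy γ′ = γ + γ″, either γ ≺ γ′ ≺ γ″ or γ″ ≺ γ′ ≺ γ. -/
/-- Encoding of the positive roots of type `D_n`: a pair `(i,j)` with `i < j` together with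
a sign (`true` for `ε_i + ε_j`, `false` for `ε_i - ε_j`). -/
def PRoot (n : ℕ) := {p : (Fin n × Fin n) × Bool // p.1.1 < p.1.2}

/-- The vector in `ℤ^n` represented by a positive root. -/
def toVec {n : ℕ} (x : PRoot n) : Fin n → ℤ :=
  if x.1.2 = true then Pi.single x.1.1.1 1 + Pi.single x.1.1.2 1
  else Pi.single x.1.1.1 1 - Pi.single x.1.1.2 1

/-- The order `≺` of the paper. -/
def prLt {n : ℕ} (x y : PRoot n) : Prop :=
  (x.1.2 = true ∧ y.1.2 = false) ∨
  (x.1.2 = true ∧ y.1.2 = true ∧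
    (y.1.1.2 < x.1.1.2 ∨ (x.1.1.2 = y.1.1.2 ∧ y.1.1.1 < x.1.1.1))) ∨
  (x.1.2 = false ∧ y.1.2 = false ∧
    (x.1.1.1 < y.1.1.1 ∨ (x.1.1.1 = y.1.1.1 ∧ x.1.1.2 < y.1.1.2)))

/-!
Comparing coordinate sums (2 for `ε_i + ε_j`, 0 for `ε_i - ε_j`), in `γ' = γ + γ''` either all
three roots are of the form `ε_i - ε_j`, or `γ'` and exactly one summand are of the form
`ε_i + ε_j`. In the first case the relation is `(ε_i - ε_j) + (ε_j - ε_l) = ε_i - ε_l` up to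
swapping the summands, and `ε_i - ε_l` sits between the two in the lexicographic order (c).
In the second case adding `ε_k - ε_l` with `k < l` to a root `ε_i + ε_j` replaces the index `l` by
the smaller index `k`, which moves the root later in order (b), while it stays before every root
`ε_k - ε_l` by (a).
-/

section

variable {n : ℕ}

lemma single_sub_single_eq_add_cases {i j k l a b : Fin n} (hij : i < j) (hkl : k < l)
    (hab : a < b) (h : (Pi.single a 1 - Pi.single b 1 : Fin n → ℤ) =
      (Pi.single i 1 - Pi.single j 1) + (Pi.single k 1 - Pi.single l 1)) :
    (j = k ∧ a = i ∧ b = l) ∨ (l = i ∧ a = k ∧ b = j) := by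
  have coord (m : Fin n) := congrFun h m
  simp only [Pi.add_apply, Pi.sub_apply, Pi.single_apply] at coord
  have hj := coord j; have hl := coord l; have ha := coord a; have hb := coord b
  obtain rfl | rfl : j = k ∨ l = i := by omega
  all_goals omega

lemma lex_lt_of_single_add_single_eq_add {i j k l a b : Fin n} (hij : i < j) (hkl : k < l)
    (hab : a < b) (h : (Pi.single a 1 + Pi.single b 1 : Fin n → ℤ) =
      (Pi.single i 1 + Pi.single j 1) + (Pi.single k 1 - Pi.single l 1)) :
    b < j ∨ (j = b ∧ a < i) := by
  have coord (m : Fin n) := congrFun h m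
  simp only [Pi.add_apply, Pi.sub_apply, Pi.single_apply] at coord
  have hl := coord l; have ha := coord a; have hb := coord b
  obtain rfl | rfl : l = i ∨ l = j := by omega
  all_goals omega

lemma sum_toVec (x : PRoot n) : ∑ m, toVec x m = if x.1.2 then 2 else 0 := by
  unfold toVec
  split_ifs <;> simp [Finset.sum_add_distrib, Finset.sum_sub_distrib]

lemma signs_of_toVec_eq_add {γ γ' γ'' : PRoot n} (h : toVec γ' = toVec γ + toVec γ'') :
    (γ.1.2 = false ∧ γ''.1.2 = false ∧ γ'.1.2 = false) ∨
    (γ.1.2 = true ∧ γ''.1.2 = false ∧ γ'.1.2 = true) ∨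
    (γ.1.2 = false ∧ γ''.1.2 = true ∧ γ'.1.2 = true) := by
  have hsum := congrArg (fun v => ∑ m, v m) h
  simp only [Pi.add_apply, Finset.sum_add_distrib, sum_toVec] at hsum
  cases hs : γ.1.2 <;> cases hs' : γ'.1.2 <;> cases hs'' : γ''.1.2 <;> simp_all

lemma convex_of_all_minus {γ γ' γ'' : PRoot n} (h : toVec γ' = toVec γ + toVec γ'')
    (hγ : γ.1.2 = false) (hγ'' : γ''.1.2 = false) (hγ' : γ'.1.2 = false) :
    (prLt γ γ' ∧ prLt γ' γ'') ∨ (prLt γ'' γ' ∧ prLt γ' γ) := by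
  obtain ⟨⟨⟨i, j⟩, s⟩, hij⟩ := γ
  obtain ⟨⟨⟨a, b⟩, u⟩, hab⟩ := γ'
  obtain ⟨⟨⟨k, l⟩, t⟩, hkl⟩ := γ''
  subst hγ hγ' hγ''
  dsimp only at hij hab hkl ⊢
  simp only [toVec, Bool.false_eq_true, if_false] at h
  simp only [prLt, Bool.false_eq_true, false_and, true_and, false_or]
  rcases single_sub_single_eq_add_cases hij hkl hab h with ⟨rfl, rfl, rfl⟩ | ⟨rfl, rfl, rfl⟩
  · left; omega
  · right; omega

lemma prLt_of_plus_add_minus {γ γ' γ'' : PRoot n} (h : toVec γ' = toVec γ + toVec γ'')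
    (hγ : γ.1.2 = true) (hγ'' : γ''.1.2 = false) (hγ' : γ'.1.2 = true) :
    prLt γ γ' ∧ prLt γ' γ'' := by
  obtain ⟨⟨⟨i, j⟩, s⟩, hij⟩ := γ
  obtain ⟨⟨⟨a, b⟩, u⟩, hab⟩ := γ'
  obtain ⟨⟨⟨k, l⟩, t⟩, hkl⟩ := γ''
  subst hγ hγ' hγ''
  dsimp only at hij hab hkl ⊢
  simp only [toVec, Bool.false_eq_true, if_false, if_true] at h
  simp only [prLt, Bool.false_eq_true, Bool.true_eq_false, false_and, true_and, and_false,
    false_or, or_false]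
  exact ⟨lex_lt_of_single_add_single_eq_add hij hkl hab h, trivial⟩

end

theorem stmt3_general (n : ℕ) (γ γ' γ'' : PRoot n)
    (h : toVec γ' = toVec γ + toVec γ'') :
    (prLt γ γ' ∧ prLt γ' γ'') ∨ (prLt γ'' γ' ∧ prLt γ' γ) := by
  rcases signs_of_toVec_eq_add h with ⟨hγ, hγ'', hγ'⟩ | ⟨hγ, hγ'', hγ'⟩ | ⟨hγ, hγ'', hγ'⟩
  · exact convex_of_all_minus h hγ hγ'' hγ'
  · exact Or.inl (prLt_of_plus_add_minus h hγ hγ'' hγ')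
  · exact Or.inr (prLt_of_plus_add_minus (h.trans (add_comm _ _)) hγ'' hγ hγ')

/-- The order `≺` is convex: if `γ' = γ + γ''` in `Φ⁺` then
either `γ ≺ γ' ≺ γ''` or `γ'' ≺ γ' ≺ γ`. -/
theorem stmt3 (n : ℕ) (hn : 4 ≤ n) (γ γ' γ'' : PRoot n)
    (h : toVec γ' = toVec γ + toVec γ'') :
    (prLt γ γ' ∧ prLt γ' γ'') ∨ (prLt γ'' γ' ∧ prLt γ' γ) :=
  stmt3_general n γ γ' γ'' h
end

section
/- Up to interchanging adjacent commuting reflections (2-term braid moves), there is a unique sequence of indices (j'_1, …, j'_{2n−4}) = (n−2, n−1, n−3, n−2, …, 1, 2) from I = {1,…,n} such that applying the lowering operators f̃_{j'_{2n−4}} ⋯ f̃_{j'_1} to the spin crystal element (+,…,+,−,−) yields (−,−,+,…,+). -/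
/-!
Everything is 0-indexed, so the spin operator is `f̃_{n-1}`. For `i + 1 < n`, `f̃_i` sends the
element with minus signs exactly at `a < b` to the one with minus signs at `a - 1, b` (if
`i + 1 = a`) or at `a, b - 1` (if `i + 1 = b` and `a + 1 < b`), while the spin operator adds two
minus signs. No operator removes minus signs (their number is `n/2 - ⟨wt, ε₁ + ⋯ + εₙ⟩`), so a word
taking `(+,…,+,-,-)` to `(-,-,+,…,+)` is a lattice path from `(n - 2, n - 1)` down to `(0, 1)`.
Any two such paths are related by 2-term braid moves, by induction on `a + b`: if their first
steps differ, then `b ≥ a + 2`, so `f̃_{a-1}` and `f̃_{b-1}` commute, and both paths are equivalent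
to going round the square to `(a - 1, b - 1)` followed by one common path.
-/

/-- The lowering operator `f̃_i` on the spin crystal of type `D_n` realized on `{+,-}^n`. -/
def spinF (n : ℕ) (i : Fin n) (τ : Fin n → Bool) : Option (Fin n → Bool) :=
  if h : (i : ℕ) + 1 < n then
    if τ i = true ∧ τ ⟨(i : ℕ) + 1, h⟩ = false then
      some (Function.update (Function.update τ i false) ⟨(i : ℕ) + 1, h⟩ true)
    else none
  else
    if τ ⟨n - 2, Nat.sub_lt i.pos (by norm_num)⟩ = true ∧
       τ ⟨n - 1, Nat.sub_lt i.pos (by norm_num)⟩ = true then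
      some (Function.update
        (Function.update τ ⟨n - 2, Nat.sub_lt i.pos (by norm_num)⟩ false)
        ⟨n - 1, Nat.sub_lt i.pos (by norm_num)⟩ false)
    else none

/-- Apply a sequence of lowering operators. -/
def applySeq (n : ℕ) (L : List (Fin n)) (τ : Fin n → Bool) : Option (Fin n → Bool) :=
  L.foldl (fun o i => o.bind (spinF n i)) (some τ)

/-- Adjacency in the Dynkin diagram of type `D_n` (0-indexed: a chain `0 — 1 — ⋯ — (n-2)`
with the node `n-1` attached to `n-3`). -/
def DynkinAdj (n : ℕ) (i j : Fin n) : Prop :=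
  ((i : ℕ) ≠ n - 1 ∧ (j : ℕ) ≠ n - 1 ∧ ((i : ℕ) + 1 = j ∨ (j : ℕ) + 1 = i)) ∨
  ((i : ℕ) = n - 1 ∧ (j : ℕ) = n - 3) ∨ ((i : ℕ) = n - 3 ∧ (j : ℕ) = n - 1)

/-- A 2-term braid move: interchange two adjacent entries whose nodes commute
(are not adjacent in the Dynkin diagram). -/
inductive Swap2 (n : ℕ) : List (Fin n) → List (Fin n) → Prop
  | mk (L1 L2 : List (Fin n)) (i j : Fin n) (h : ¬ DynkinAdj n i j) :
      Swap2 n (L1 ++ i :: j :: L2) (L1 ++ j :: i :: L2)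

open Finset Function

theorem Relation.EqvGen.map {α β : Type*} {r : α → α → Prop} {s : β → β → Prop} (f : α → β)
    (hf : ∀ a b, r a b → s (f a) (f b)) {a b : α} (h : Relation.EqvGen r a b) :
    Relation.EqvGen s (f a) (f b) := by
  induction h with
  | rel a b hab => exact .rel _ _ (hf a b hab)
  | refl a => exact .refl _
  | symm a b _ ih => exact ih.symm
  | trans a b c _ _ ihab ihbc => exact ihab.trans _ _ _ ihbc

section

variable {n : ℕ}

theorem Swap2.cons (x : Fin n) {L M : List (Fin n)} (h : Swap2 n L M) :
    Swap2 n (x :: L) (x :: M) := by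
  obtain ⟨L1, L2, i, j, hij⟩ := h
  exact Swap2.mk (x :: L1) L2 i j hij

theorem Swap2.eqvGen_cons (x : Fin n) {L M : List (Fin n)}
    (h : Relation.EqvGen (Swap2 n) L M) : Relation.EqvGen (Swap2 n) (x :: L) (x :: M) :=
  h.map (List.cons x) fun _ _ => Swap2.cons x

theorem Swap2.eqvGen_square {i j : Fin n} (hij : ¬ DynkinAdj n i j) {L M P : List (Fin n)}
    (hL : Relation.EqvGen (Swap2 n) L (j :: P)) (hM : Relation.EqvGen (Swap2 n) M (i :: P)) :
    Relation.EqvGen (Swap2 n) (i :: L) (j :: M) :=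
  (Swap2.eqvGen_cons i hL).trans _ _ _
    ((Relation.EqvGen.rel _ _ (Swap2.mk [] P i j hij)).trans _ _ _ (Swap2.eqvGen_cons j hM).symm)

theorem applySeq_cons (i : Fin n) (L : List (Fin n)) (τ : Fin n → Bool) :
    applySeq n (i :: L) τ = (spinF n i τ).bind (applySeq n L) := by
  have foldl_none : ∀ L : List (Fin n), L.foldl (fun o i => o.bind (spinF n i)) none = none := by
    intro L; induction L with
    | nil => rfl
    | cons _ _ ih => exact ih
  cases h : spinF n i τ <;> simp [applySeq, h, foldl_none]

def minusCount (τ : Fin n → Bool) : ℕ := ∑ j, (!τ j).toNat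

theorem minusCount_update (τ : Fin n → Bool) (x : Fin n) (v : Bool) :
    minusCount (update τ x v) + (!τ x).toNat = minusCount τ + (!v).toNat := by
  have hupd : (fun j => (!update τ x v j).toNat) = update (fun j => (!τ j).toNat) x (!v).toNat :=
    funext fun j => apply_update (fun _ b => (!b).toNat) τ x v j
  rw [minusCount, minusCount, hupd, sum_update_of_mem (mem_univ x),
    ← add_sum_erase univ _ (mem_univ x), sdiff_singleton_eq_erase]
  ring

theorem minusCount_of_spinF_eq_some (hn : 2 ≤ n) {i : Fin n} {τ τ' : Fin n → Bool}
    (h : spinF n i τ = some τ') :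
    minusCount τ' = minusCount τ + if (i : ℕ) + 1 < n then 0 else 2 := by
  unfold spinF at h
  split_ifs at h with hi hτ hτ <;> cases h
  · rw [if_pos hi]
    have h1 := minusCount_update τ i false
    have h2 := minusCount_update (update τ i false) ⟨i + 1, hi⟩ true
    rw [update_of_ne (by simp [Fin.ext_iff])] at h2
    simp only [hτ.1, hτ.2, Bool.not_true, Bool.not_false, Bool.toNat_false, Bool.toNat_true]
      at h1 h2
    omega
  · rw [if_neg hi]
    have h1 := minusCount_update τ ⟨n - 2, by omega⟩ false
    have h2 := minusCount_update (update τ ⟨n - 2, by omega⟩ false) ⟨n - 1, by omega⟩ false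
    rw [update_of_ne (by simp [Fin.ext_iff]; omega)] at h2
    simp only [hτ.1, hτ.2, Bool.not_true, Bool.not_false, Bool.toNat_false, Bool.toNat_true]
      at h1 h2
    omega

theorem minusCount_le_of_applySeq_eq_some (hn : 2 ≤ n) {L : List (Fin n)}
    {τ τ' : Fin n → Bool} (h : applySeq n L τ = some τ') : minusCount τ ≤ minusCount τ' := by
  induction L generalizing τ with
  | nil => cases h; rfl
  | cons i L ih =>
    rw [applySeq_cons, Option.bind_eq_some_iff] at h
    obtain ⟨σ, hσ, hL⟩ := h
    have := minusCount_of_spinF_eq_some hn hσ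
    exact le_trans (by omega) (ih hL)

def minusPair (n a b : ℕ) : Fin n → Bool := fun j => decide ((j : ℕ) ≠ a ∧ (j : ℕ) ≠ b)

theorem minusPair_comm (a b : ℕ) : minusPair n a b = minusPair n b a := by
  funext j
  simp only [minusPair, and_comm]

theorem minusCount_minusPair {a b : ℕ} (hab : a < b) (hb : b < n) :
    minusCount (minusPair n a b) = 2 := by
  have hfilter : (univ.filter fun j : Fin n => (j : ℕ) = a ∨ (j : ℕ) = b) =
      {⟨a, by omega⟩, ⟨b, hb⟩} := by
    ext j
    simp [Fin.ext_iff]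
  have hcard := congrArg card hfilter
  rw [card_pair (by simp [Fin.ext_iff]; omega), card_filter] at hcard
  rw [minusCount, ← hcard]
  refine sum_congr rfl fun j _ => ?_
  by_cases hja : (j : ℕ) = a <;> by_cases hjb : (j : ℕ) = b <;> simp [minusPair, hja, hjb]

theorem eq_zero_one_of_minusPair_eq {a b : ℕ} (hab : a < b) (hb : b < n)
    (h : minusPair n a b = minusPair n 0 1) : a = 0 ∧ b = 1 := by
  have h0 := congrFun h ⟨0, by omega⟩
  have h1 := congrFun h ⟨1, by omega⟩
  simp only [minusPair, decide_eq_decide] at h0 h1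
  omega

theorem spinF_minusPair_succ {i : ℕ} (hi : i + 1 < n) {a : ℕ} (hai : a ≠ i) (hai' : a ≠ i + 1) :
    spinF n ⟨i, by omega⟩ (minusPair n a (i + 1)) = some (minusPair n a i) := by
  have hτ : minusPair n a (i + 1) ⟨i, by omega⟩ = true ∧
      minusPair n a (i + 1) ⟨i + 1, hi⟩ = false := by
    simp [minusPair]; omega
  rw [spinF, dif_pos hi, if_pos hτ]
  congr 1
  funext j
  simp only [update_apply, Fin.ext_iff, minusPair]
  split_ifs <;> simp_all; omega

theorem spinF_minusPair_eq_some {a b : ℕ} (hab : a < b) (hb : b < n) {i : Fin n}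
    {τ' : Fin n → Bool} (h : spinF n i (minusPair n a b) = some τ') :
    ((i : ℕ) + 1 = a ∧ τ' = minusPair n i b) ∨ ((i : ℕ) + 1 = b ∧ a < i ∧ τ' = minusPair n a i) ∨
      2 < minusCount τ' := by
  obtain ⟨i, hi'⟩ := i
  dsimp only
  by_cases hi : i + 1 < n
  · have hτ : minusPair n a b ⟨i, hi'⟩ = true ∧ minusPair n a b ⟨i + 1, hi⟩ = false := by
      by_contra hτ
      simp [spinF, hi, hτ] at h
    simp only [minusPair, decide_eq_true_eq, decide_eq_false_iff_not, not_and, not_not] at hτ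
    by_cases hia : i + 1 = a
    · subst hia
      rw [minusPair_comm, spinF_minusPair_succ hi (by omega) (by omega), minusPair_comm] at h
      exact Or.inl ⟨rfl, (Option.some_injective _ h).symm⟩
    · obtain rfl : i + 1 = b := hτ.2 hia
      rw [spinF_minusPair_succ hi (by omega) (by omega)] at h
      exact Or.inr (Or.inl ⟨rfl, by omega, (Option.some_injective _ h).symm⟩)
  · have hcount := minusCount_of_spinF_eq_some (by omega) h
    rw [if_neg hi, minusCount_minusPair hab hb] at hcount
    omega

theorem applySeq_minusPair_cons {a b : ℕ} (hab : a < b) (hb : b < n) {i : Fin n}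
    {L : List (Fin n)} (h : applySeq n (i :: L) (minusPair n a b) = some (minusPair n 0 1)) :
    ((i : ℕ) + 1 = a ∧ applySeq n L (minusPair n i b) = some (minusPair n 0 1)) ∨
      ((i : ℕ) + 1 = b ∧ a < i ∧ applySeq n L (minusPair n a i) = some (minusPair n 0 1)) := by
  rw [applySeq_cons, Option.bind_eq_some_iff] at h
  obtain ⟨σ, hσ, hL⟩ := h
  rcases spinF_minusPair_eq_some hab hb hσ with ⟨hi, rfl⟩ | ⟨hi, hai, rfl⟩ | hcount
  · exact Or.inl ⟨hi, hL⟩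
  · exact Or.inr ⟨hi, hai, hL⟩
  · have := minusCount_le_of_applySeq_eq_some (by omega) hL
    rw [minusCount_minusPair zero_lt_one (by omega)] at this
    omega

theorem exists_applySeq_minusPair {a b : ℕ} (hab : a < b) (hb : b < n) :
    ∃ L, applySeq n L (minusPair n a b) = some (minusPair n 0 1) := by
  induction a with
  | zero =>
    induction b, hab using Nat.le_induction with
    | base => exact ⟨[], rfl⟩
    | succ b hb1 ih =>
      obtain ⟨L, hL⟩ := ih (by omega)
      refine ⟨⟨b, by omega⟩ :: L, ?_⟩
      rwa [applySeq_cons, spinF_minusPair_succ hb (by omega) (by omega),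
        Option.bind_some]
  | succ a ih =>
    obtain ⟨L, hL⟩ := ih (by omega)
    refine ⟨⟨a, by omega⟩ :: L, ?_⟩
    rwa [applySeq_cons, minusPair_comm (a + 1), spinF_minusPair_succ (i := a) (by omega)
      (by omega) (by omega), Option.bind_some, minusPair_comm]

theorem applySeq_chain {k : ℕ} (hk : k + 1 < n) :
    applySeq n (((List.range k).reverse.flatMap fun j => [j, j + 1]).map
        fun m => (⟨m % n, Nat.mod_lt m (by omega)⟩ : Fin n))
      (minusPair n k (k + 1)) = some (minusPair n 0 1) := by
  induction k with
  | zero => rfl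
  | succ k ih =>
    have hmod : ∀ m (hm : m < n), (⟨m % n, Nat.mod_lt m (by omega)⟩ : Fin n) = ⟨m, by omega⟩ :=
      fun m hm => Fin.ext (Nat.mod_eq_of_lt hm)
    simp only [List.range_succ, List.reverse_append, List.reverse_singleton,
      List.flatMap_cons, List.cons_append, List.nil_append, List.map_cons]
    rw [hmod k (by omega), hmod (k + 1) (by omega), applySeq_cons, minusPair_comm (k + 1),
      spinF_minusPair_succ (i := k) (by omega) (by omega) (by omega), Option.bind_some,
      applySeq_cons, minusPair_comm, spinF_minusPair_succ hk (by omega)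
      (by omega), Option.bind_some]
    exact ih (by omega)

theorem eqvGen_swap2_of_applySeq_minusPair {a b : ℕ} (hab : a < b) (hb : b < n)
    {L M : List (Fin n)} (hL : applySeq n L (minusPair n a b) = some (minusPair n 0 1))
    (hM : applySeq n M (minusPair n a b) = some (minusPair n 0 1)) :
    Relation.EqvGen (Swap2 n) L M := by
  induction hs : a + b using Nat.strong_induction_on generalizing a b L M with
  | _ s ih =>
  have diamond : ∀ (i j : Fin n) (L M : List (Fin n)), (i : ℕ) + 1 = a → (j : ℕ) + 1 = b →
      a < j → applySeq n L (minusPair n i b) = some (minusPair n 0 1) →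
      applySeq n M (minusPair n a j) = some (minusPair n 0 1) →
      Relation.EqvGen (Swap2 n) (i :: L) (j :: M) := by
    intro i j L M hi hj haj hL hM
    obtain ⟨P, hP⟩ := exists_applySeq_minusPair (show (i : ℕ) < j by omega) j.isLt
    have hLP : Relation.EqvGen (Swap2 n) L (j :: P) := by
      refine ih (i + b) (by omega) (by omega) hb hL ?_ rfl
      rw [applySeq_cons, ← hj, spinF_minusPair_succ (i := j) (by omega) (by omega) (by omega)]
      exact hP
    have hMP : Relation.EqvGen (Swap2 n) M (i :: P) := by
      refine ih (a + j) (by omega) (by omega) (by omega) hM ?_ rfl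
      rw [applySeq_cons, ← hi, minusPair_comm, spinF_minusPair_succ (i := i) (by omega) (by omega)
        (by omega), minusPair_comm]
      exact hP
    exact Swap2.eqvGen_square (by unfold DynkinAdj; omega) hLP hMP
  rcases L with _ | ⟨i, L⟩ <;> rcases M with _ | ⟨j, M⟩
  · exact .refl _
  · obtain ⟨rfl, rfl⟩ := eq_zero_one_of_minusPair_eq hab hb (Option.some_injective _ hL)
    rcases applySeq_minusPair_cons hab hb hM with h | h <;> omega
  · obtain ⟨rfl, rfl⟩ := eq_zero_one_of_minusPair_eq hab hb (Option.some_injective _ hM)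
    rcases applySeq_minusPair_cons hab hb hL with h | h <;> omega
  · rcases applySeq_minusPair_cons hab hb hL with ⟨hi, hL⟩ | ⟨hi, hai, hL⟩ <;>
      rcases applySeq_minusPair_cons hab hb hM with ⟨hj, hM⟩ | ⟨hj, haj, hM⟩
    · obtain rfl : i = j := Fin.ext (by omega)
      exact Swap2.eqvGen_cons i (ih (i + b) (by omega) (by omega) hb hL hM rfl)
    · exact diamond i j L M hi hj haj hL hM
    · exact (diamond j i M L hj hi hai hM hL).symm
    · obtain rfl : i = j := Fin.ext (by omega)
      exact Swap2.eqvGen_cons i (ih (a + i) (by omega) hai (by omega) hL hM rfl)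

end

/-- Up to 2-term braid moves, the sequence `(n-2, n-1, n-3, n-2, …, 1, 2)` (1-indexed;
0-indexed `(n-3, n-2, n-4, n-3, …, 0, 1)`) is the unique sequence of indices whose
lowering operators take `(+,…,+,-,-)` to `(-,-,+,…,+)` in the spin crystal. -/
theorem stmt6 (n : ℕ) (hn : 4 ≤ n) :
    let τ0 : Fin n → Bool := fun i => decide ((i : ℕ) < n - 2)
    let τ1 : Fin n → Bool := fun i => decide (2 ≤ (i : ℕ))
    let L0 : List (Fin n) :=
      ((List.range (n - 2)).reverse.flatMap (fun k => [k, k + 1])).map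
        (fun m => (⟨m % n, Nat.mod_lt m (by omega)⟩ : Fin n))
    applySeq n L0 τ0 = some τ1 ∧
    ∀ L : List (Fin n), applySeq n L τ0 = some τ1 → Relation.EqvGen (Swap2 n) L L0 := by
  intro τ0 τ1 L0
  have hτ0 : τ0 = minusPair n (n - 2) (n - 2 + 1) := by
    funext i
    simp only [τ0, minusPair, decide_eq_decide]
    omega
  have hτ1 : τ1 = minusPair n 0 1 := by
    funext i
    simp only [τ1, minusPair, decide_eq_decide]
    omega
  have hL0 : applySeq n L0 τ0 = some τ1 := hτ0 ▸ hτ1 ▸ applySeq_chain (by omega)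
  refine ⟨hL0, fun L hL => ?_⟩
  rw [hτ0, hτ1] at hL hL0
  exact eqvGen_swap2_of_applySeq_minusPair (by omega) (by omega) hL hL0
end

section
/- Let B^J = ℤ_+^{Φ⁺(J)} be the set of Lusztig data supported on Φ⁺(J) = {ε_i+ε_j : 1 ≤ i < j ≤ n}, identified with arrays c = (c_{j̄ī}) on the triangle Δ_n. An element c ∈ B^J is an 𝔩-highest weight element (i.e., ẽ_i c = 0 for all i ∈ {1,…,n−1} under the signature-rule crystal operators of Proposition 3.2) if and only if c_{n̄ n−1̄} ≥ c_{n−2̄ n−3̄} ≥ ⋯ and c_{j̄ī} = 0 for all other entries. -/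
/-!  A Lusztig datum on `Φ⁺(J)` is encoded as `c : ℕ → ℕ → ℕ`, where `c j i` is the entry
`c_{j̄ī}` attached to the root `ε_i + ε_j` (`1 ≤ i < j ≤ n`); all other values vanish. -/

/-- The list of blocks `(m_t, p_t)` of the signature `σ_i(c)` of Proposition 3.2 restricted
to `B^J` (the third block is trivial there): first the blocks
`(-^{c_{j̄ī}} +^{c_{j̄,i+1̄}})` for `j = n, n-1, …, i+2`, then the blocks
`(-^{c_{ī j̄}} +^{c_{i+1̄ j̄}})` for `j = i-1, …, 1`. -/
def blocksOf (n : ℕ) (c : ℕ → ℕ → ℕ) (i : ℕ) : List (ℕ × ℕ) :=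
  ((List.range (n - i - 1)).map fun t => (c (n - t) i, c (n - t) (i + 1))) ++
  ((List.range (i - 1)).map fun t => (c i (i - 1 - t), c (i + 1) (i - 1 - t)))

/-- `ẽ_i c = 0` by the signature rule: every prefix of the signature contains at least as
many `+`'s (from earlier blocks) as `-`'s. -/
def EzeroAt (n : ℕ) (c : ℕ → ℕ → ℕ) (i : ℕ) : Prop :=
  ∀ t, (((blocksOf n c i).take (t + 1)).map Prod.fst).sum ≤
        (((blocksOf n c i).take t).map Prod.snd).sum

/-- The `-`-multiplicity of the `s`-th block of `σ_i(c)`. -/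
def Fm (n : ℕ) (c : ℕ → ℕ → ℕ) (i s : ℕ) : ℕ :=
  if s < n - i - 1 then c (n - s) i else c i (i - 1 - (s - (n - i - 1)))

/-- The `+`-multiplicity of the `s`-th block of `σ_i(c)`. -/
def Gp (n : ℕ) (c : ℕ → ℕ → ℕ) (i s : ℕ) : ℕ :=
  if s < n - i - 1 then c (n - s) (i + 1) else c (i + 1) (i - 1 - (s - (n - i - 1)))

lemma blocksOf_eq (n : ℕ) (c : ℕ → ℕ → ℕ) (i : ℕ) :
    blocksOf n c i =
      (List.range ((n - i - 1) + (i - 1))).map (fun s => (Fm n c i s, Gp n c i s)) := by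
  unfold blocksOf
  rw [List.range_add, List.map_append, List.map_map]
  congr 1
  · apply List.map_congr_left
    intro t ht
    rw [List.mem_range] at ht
    simp [Fm, Gp, ht]
  · apply List.map_congr_left
    intro t ht
    simp only [Function.comp_apply, Fm, Gp]
    rw [if_neg (by omega), if_neg (by omega), Nat.add_sub_cancel_left]

lemma ezero_iff (n : ℕ) (c : ℕ → ℕ → ℕ) (i : ℕ) :
    EzeroAt n c i ↔ ∀ t,
      (∑ s ∈ Finset.range (min (t + 1) ((n - i - 1) + (i - 1))), Fm n c i s) ≤
      (∑ s ∈ Finset.range (min t ((n - i - 1) + (i - 1))), Gp n c i s) := by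
  have e1 : ∀ t, (((blocksOf n c i).take t).map Prod.fst).sum =
      ∑ s ∈ Finset.range (min t ((n - i - 1) + (i - 1))), Fm n c i s := by
    intro t
    rw [blocksOf_eq, ← List.map_take, List.take_range, List.map_map]
    rfl
  have e2 : ∀ t, (((blocksOf n c i).take t).map Prod.snd).sum =
      ∑ s ∈ Finset.range (min t ((n - i - 1) + (i - 1))), Gp n c i s := by
    intro t
    rw [blocksOf_eq, ← List.map_take, List.take_range, List.map_map]
    rfl
  unfold EzeroAt
  simp only [e1, e2]

/-- Off-subdiagonal entries vanish, given vanishing of column `i+1` in higher rows. -/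
lemma lemA (n : ℕ) (c : ℕ → ℕ → ℕ) (i j : ℕ) (hE : EzeroAt n c i)
    (h1 : 1 ≤ i) (h2 : i + 2 ≤ j) (h3 : j ≤ n)
    (hrow : ∀ s, s < n - j → c (n - s) (i + 1) = 0) : c j i = 0 := by
  have h := (ezero_iff n c i).1 hE (n - j)
  rw [min_eq_left (by omega), min_eq_left (by omega)] at h
  have hR : ∑ s ∈ Finset.range (n - j), Gp n c i s = 0 := by
    apply Finset.sum_eq_zero
    intro s hs
    rw [Finset.mem_range] at hs
    unfold Gp
    rw [if_pos (by omega)]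
    exact hrow s hs
  have hL : c j i ≤ ∑ s ∈ Finset.range (n - j + 1), Fm n c i s := by
    have e : Fm n c i (n - j) = c j i := by
      unfold Fm
      rw [if_pos (by omega)]
      have : n - (n - j) = j := by omega
      rw [this]
    rw [← e]
    exact Finset.single_le_sum (fun s _ => Nat.zero_le _) (Finset.mem_range.2 (by omega))
  omega

/-- The subdiagonal chain inequality, given vanishing of column `j+1` in higher rows
except at row `j+2`. -/
lemma lemB (n : ℕ) (c : ℕ → ℕ → ℕ) (j : ℕ) (hE : EzeroAt n c j)
    (h2 : 2 ≤ j) (h3 : j + 1 ≤ n)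
    (hz2 : ∀ s, s < n - j - 1 → s ≠ n - j - 2 → c (n - s) (j + 1) = 0) :
    c j (j - 1) ≤ c (j + 2) (j + 1) := by
  have h := (ezero_iff n c j).1 hE (n - j - 1)
  rw [min_eq_left (by omega), min_eq_left (by omega)] at h
  have hL : c j (j - 1) ≤ ∑ s ∈ Finset.range (n - j - 1 + 1), Fm n c j s := by
    have e : Fm n c j (n - j - 1) = c j (j - 1) := by
      unfold Fm
      rw [if_neg (by omega), Nat.sub_self, Nat.sub_zero]
    rw [← e]
    exact Finset.single_le_sum (fun s _ => Nat.zero_le _) (Finset.mem_range.2 (by omega))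
  by_cases hc : n - j - 1 = 0
  · have hR0 : ∑ s ∈ Finset.range (n - j - 1), Gp n c j s = 0 := by
      rw [hc]
      simp
    omega
  · have hR : ∑ s ∈ Finset.range (n - j - 1), Gp n c j s = c (j + 2) (j + 1) := by
      rw [Finset.sum_eq_single_of_mem (n - j - 2) (Finset.mem_range.2 (by omega))]
      · unfold Gp
        rw [if_pos (by omega)]
        have : n - (n - j - 2) = j + 2 := by omega
        rw [this]
      · intro b hb hne
        rw [Finset.mem_range] at hb
        unfold Gp
        rw [if_pos (by omega)]
        exact hz2 b hb hne
    omega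

/-- `c ∈ B^J` is an `𝔩`-highest weight element (i.e. `ẽ_i c = 0` for all `i ∈ {1,…,n-1}`)
iff `c_{n̄,n-1̄} ≥ c_{n-2̄,n-3̄} ≥ ⋯` and all other entries of `c` vanish. -/
theorem stmt11 (n : ℕ) (hn : 4 ≤ n) (c : ℕ → ℕ → ℕ)
    (hsupp : ∀ j i, c j i ≠ 0 → 1 ≤ i ∧ i < j ∧ j ≤ n) :
    (∀ i, 1 ≤ i → i ≤ n - 1 → EzeroAt n c i) ↔
    ((∀ k, 4 ≤ n - 2 * k →
        c (n - 2 * k - 2) (n - 2 * k - 3) ≤ c (n - 2 * k) (n - 2 * k - 1)) ∧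
     (∀ j i, c j i ≠ 0 → ∃ k, 2 * k + 2 ≤ n ∧ j = n - 2 * k ∧ i = n - 2 * k - 1)) := by
  constructor
  · intro H
    have clean : ∀ d j i, n - j ≤ d → c j i ≠ 0 → i = j - 1 ∧ Even (n - j) := by
      intro d
      induction d with
      | zero =>
        intro j i hd hne
        obtain ⟨hi1, hij, hjn⟩ := hsupp j i hne
        have hj : j = n := by omega
        constructor
        · by_contra hne2
          have : c j i = 0 := by
            apply lemA n c i j (H i hi1 (by omega)) hi1 (by omega) (by omega)
            intro s hs
            exact absurd hs (by omega)
          exact hne this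
        · exact ⟨0, by omega⟩
      | succ d ih =>
        intro j i hd hne
        obtain ⟨hi1, hij, hjn⟩ := hsupp j i hne
        by_cases hdd : n - j ≤ d
        · exact ih j i hdd hne
        have hdj : n - j = d + 1 := by omega
        have hrow : ∀ s, s < n - j → ∀ col, col + 2 ≤ n - s → c (n - s) col = 0 := by
          intro s hs col hcol
          by_contra hnz
          obtain ⟨he, _⟩ := ih (n - s) col (by omega) hnz
          omega
        have hieq : i = j - 1 := by
          by_contra hne2
          have hij2 : i + 2 ≤ j := by omega
          have : c j i = 0 := by
            apply lemA n c i j (H i hi1 (by omega)) hi1 hij2 hjn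
            intro s hs
            exact hrow s hs (i + 1) (by omega)
          exact hne this
        refine ⟨hieq, ?_⟩
        by_cases hpar : Even (n - j)
        · exact hpar
        · exfalso
          have hB := lemB n c j (H j (by omega) (by omega)) (by omega) (by omega)
            (fun s hs hsne => hrow s (by omega) (j + 1) (by omega))
          have hz : c (j + 2) (j + 1) = 0 := by
            by_contra hnz
            obtain ⟨_, _, hle⟩ := hsupp _ _ hnz
            obtain ⟨_, ⟨m, hm⟩⟩ := ih (j + 2) (j + 1) (by omega) hnz
            exact hpar ⟨m + 1, by omega⟩
          rw [hieq] at hne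
          omega
    constructor
    · intro k hk
      have hB := lemB n c (n - 2 * k - 2)
        (H (n - 2 * k - 2) (by omega) (by omega)) (by omega) (by omega) ?_
      · have e1 : n - 2 * k - 2 - 1 = n - 2 * k - 3 := by omega
        have e2 : n - 2 * k - 2 + 2 = n - 2 * k := by omega
        have e3 : n - 2 * k - 2 + 1 = n - 2 * k - 1 := by omega
        rw [e1, e2, e3] at hB
        exact hB
      · intro s hs hsne
        by_contra hnz
        obtain ⟨hcol, _⟩ := clean n (n - s) (n - 2 * k - 2 + 1) (by omega) hnz
        omega
    · intro j i hne
      obtain ⟨hi1, hij, hjn⟩ := hsupp j i hne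
      obtain ⟨he, ⟨m, hm⟩⟩ := clean n j i (by omega) hne
      exact ⟨m, by omega, by omega, by omega⟩
  · rintro ⟨hchain, hshape⟩ i hi1 hi2
    rw [ezero_iff]
    intro t
    set m := (n - i - 1) + (i - 1) with hm
    have hFz : ∀ s, s ≠ n - i - 1 → Fm n c i s = 0 := by
      intro s hs
      unfold Fm
      split_ifs with h
      · by_contra hnz
        obtain ⟨k, hk, hj, hii⟩ := hshape _ _ hnz
        omega
      · by_contra hnz
        obtain ⟨k, hk, hj, hii⟩ := hshape _ _ hnz
        omega
    by_cases h0 : c i (i - 1) = 0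
    · have hz : ∀ s ∈ Finset.range (min (t + 1) m), Fm n c i s = 0 := by
        intro s hs
        by_cases hse : s = n - i - 1
        · subst hse
          unfold Fm
          rw [if_neg (by omega), Nat.sub_self, Nat.sub_zero]
          exact h0
        · exact hFz s hse
      rw [Finset.sum_eq_zero hz]
      exact Nat.zero_le _
    · obtain ⟨k, hk, hj, hii⟩ := hshape _ _ h0
      obtain ⟨hc1, hc2, _⟩ := hsupp _ _ h0
      have hi2' : i ≤ n - 2 := by omega
      have hch := hchain (k - 1) (by omega)
      have e1 : n - 2 * (k - 1) - 2 = i := by omega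
      have e2 : n - 2 * (k - 1) - 3 = i - 1 := by omega
      have e3 : n - 2 * (k - 1) = i + 2 := by omega
      have e4 : n - 2 * (k - 1) - 1 = i + 1 := by omega
      rw [e2, e1, e4, e3] at hch
      by_cases hin : n - i - 1 < min (t + 1) m
      · have hL : ∑ s ∈ Finset.range (min (t + 1) m), Fm n c i s = c i (i - 1) := by
          rw [Finset.sum_eq_single_of_mem (n - i - 1) (Finset.mem_range.2 hin)]
          · unfold Fm
            rw [if_neg (by omega), Nat.sub_self, Nat.sub_zero]
          · intro b _ hb
            exact hFz b hb
        rw [hL]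
        have hmem : n - i - 2 ∈ Finset.range (min t m) := by
          rw [Finset.mem_range]
          omega
        calc c i (i - 1) ≤ c (i + 2) (i + 1) := hch
          _ = Gp n c i (n - i - 2) := by
              unfold Gp
              rw [if_pos (by omega)]
              have : n - (n - i - 2) = i + 2 := by omega
              rw [this]
          _ ≤ ∑ s ∈ Finset.range (min t m), Gp n c i s :=
              Finset.single_le_sum (fun s _ => Nat.zero_le _) hmem
      · have hz : ∀ s ∈ Finset.range (min (t + 1) m), Fm n c i s = 0 := by
          intro s hs
          rw [Finset.mem_range] at hs
          exact hFz s (by omega)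
        rw [Finset.sum_eq_zero hz]
        exact Nat.zero_le _
end

section
/- In the crystal 𝒯^{↘} of semistandard tableaux of anti-normal shapes λ^π (λ′ even, ℓ(λ) ≤ n) in the alphabet {n̄ < ⋯ < 1̄}, the operator f̃_n defined by the signature rule on columns — assigning + to a column whose top entry is > n−1̄ (or an empty column), − to a column containing both n−1̄ and n̄, and adding a vertical domino (n̄ over n−1̄) at the column of the leftmost + in the reduced signature — sends a semistandard tableau of anti-normal shape with even conjugate shape to another such tableau (when nonzero). -/
/-!  Entries of tableaux are barred letters `k̄ ∈ {n̄ < ⋯ < 1̄}`, encoded by the natural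
number `k`; the alphabet order is the reverse of the order on `ℕ`.  An anti-normal tableau
is encoded as its list of columns, rightmost column first, each column listed from top to
bottom; in the encoding a column is strictly decreasing (`ℕ`-order) from top to bottom. -/

/-- Replace the first entry `y ≤ x` of a column by `x`, returning the bumped entry. -/
def replFirst (x : ℕ) : List ℕ → List ℕ × Option ℕ
  | [] => ([], none)
  | z :: t =>
    if z ≤ x then (x :: t, some z)
    else
      let p := replFirst x t
      (z :: p.1, p.2)

/-- Reverse Schensted column insertion of `x` into an anti-normal tableau (starting from
the rightmost column); returns the new tableau and the index of the column in which a new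
box was created. -/
def insB (x : ℕ) : List (List ℕ) → List (List ℕ) × ℕ
  | [] => ([[x]], 0)
  | c :: rest =>
    match c with
    | [] => ([x] :: rest, 0)
    | z :: _ =>
      if z < x then ((x :: c) :: rest, 0)
      else
        match replFirst x c with
        | (c', some y) =>
          let p := insB y rest
          (c' :: p.1, p.2 + 1)
        | (_, none) => ((x :: c) :: rest, 0)

/-- One Burge step: insert `b` by reverse column insertion, then add `a` directly above the
newly created box. -/
def insPair (a b : ℕ) (T : List (List ℕ)) : List (List ℕ) :=
  let p := insB b T
  p.1.set p.2 (a :: p.1.getD p.2 [])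

/-- The Burge insertion tableau `P^{↘}(a,b)`: the biletters `(a_r,b_r), …, (a_1,b_1)` are
inserted in that order. -/
def burge (L : List (ℕ × ℕ)) : List (List ℕ) :=
  L.foldr (fun p T => insPair p.1 p.2 T) []

/-- Biwords of `Ω`: letters in `[n̄]`, `a_k < b_k` in the bar order (i.e. `b_k < a_k` in
`ℕ`), and biletters weakly increasing for `(a,b) < (c,d) ⟺ a < c ∨ (a = c ∧ b > d)`
(bar order), i.e. in `ℕ`: `c < a ∨ (a = c ∧ b ≤ d)`. -/
def IsBiword (n : ℕ) (L : List (ℕ × ℕ)) : Prop :=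
  (∀ p ∈ L, 1 ≤ p.2 ∧ p.2 < p.1 ∧ p.1 ≤ n) ∧
  L.Chain' (fun p q => q.1 < p.1 ∨ (p.1 = q.1 ∧ p.2 ≤ q.2))

/-- Semistandard tableau of anti-normal shape, in the encoding above: columns nonempty with
entries in `[1,n]`, strictly decreasing (`ℕ`) top to bottom; column lengths weakly decrease
from right to left, and along each row (aligned at the bottom) the entries weakly decrease
(`ℕ`) from left to right, i.e. weakly increase in the bar order. -/
def IsAntiSSYT (n : ℕ) (T : List (List ℕ)) : Prop :=
  (∀ col ∈ T, col ≠ [] ∧ (∀ x ∈ col, 1 ≤ x ∧ x ≤ n) ∧ col.Chain' (· > ·)) ∧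
  T.Chain' (fun cr cl => cl.length ≤ cr.length ∧
    ∀ r, r < cl.length → cr.getD (cr.length - 1 - r) 0 ≤ cl.getD (cl.length - 1 - r) 0)

/-- The sign of a column for the operator `f̃_n` on `𝒯^{↘}`: `+` (`1`) if the column is
empty or its top entry is bar-greater than `n-1̄` (`ℕ`-value `< n-1`), `-` (`-1`) if the
column contains both `n-1̄` and `n̄`, and `·` (`0`) otherwise. -/
def colSign (n : ℕ) : List ℕ → Int
  | [] => 1
  | col@(z :: _) =>
    if (n - 1) ∈ col ∧ n ∈ col then -1 else if z < n - 1 then 1 else 0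

/-- The operator `f̃_n` on `𝒯^{↘}`: compute the signature of the columns (enumerated from
the right, with one further empty column), cancel pairs `(+,-)` with the `+` before the
`-`, and add a vertical domino `n̄` over `n-1̄` on top of the column of the first remaining
`+`. -/
def ftn (n : ℕ) (T : List (List ℕ)) : List (List ℕ) :=
  let sigs : List (Int × ℕ) :=
    ((((T ++ [[]]).zipIdx.map Prod.swap)).map fun p : ℕ × List ℕ => (colSign n p.2, p.1)).filter
      fun p : Int × ℕ => p.1 ≠ 0
  let stack := sigs.foldl
    (fun (st : List (Int × ℕ)) (p : Int × ℕ) =>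
      if p.1 = -1 ∧ st.head?.map Prod.fst = some 1 then st.tail else p :: st)
    ([] : List (Int × ℕ))
  match stack.reverse.find? (fun p : Int × ℕ => p.1 = 1) with
  | some p =>
    if p.2 < T.length then T.set p.2 (n :: (n - 1) :: T.getD p.2 []) else T ++ [[n, n - 1]]
  | none => T

/-! The domino `n̄` over `n-1̄` is put on top of a column `C` of sign `+`, which is empty or
starts with an entry bar-greater than `n-1̄`, so `C` stays strictly increasing. The column `D`
just right of `C` does not carry `+`: otherwise the two `+` would be adjacent in the signature,
the one of `D` would stay directly below the one of `C` on the cancellation stack, and it would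
come first in the reduced signature. Hence `D` starts with `n-1̄` or `n̄` and cannot have the
length of `C` (their top row would decrease); both lengths being even, `D` is at least two
boxes longer, and beside the domino its entries are bar-at-least `n̄` and `n-1̄`. -/

theorem List.getD_cons_cons_length_sub_one_sub {α : Type*} (a b : α) (l : List α) (d : α)
    {r : ℕ} (hr : r < l.length) :
    (a :: b :: l).getD ((a :: b :: l).length - 1 - r) d = l.getD (l.length - 1 - r) d := by
  rw [show (a :: b :: l).length - 1 - r = l.length - 1 - r + 2 by simp only [length_cons]; omega]
  rfl

theorem List.IsChain.set {α : Type*} {R : α → α → Prop} {l : List α} (hl : l.IsChain R)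
    {i : ℕ} (hi : i < l.length) {a : α} (hprev : ∀ j (hj : j + 1 = i), R (l[j]'(by omega)) a)
    (hnext : ∀ hi : i + 1 < l.length, R a l[i + 1]) : (l.set i a).IsChain R := by
  rw [isChain_iff_getElem]
  intro j hj
  simp only [length_set] at hj
  simp only [getElem_set]
  split_ifs with h₁ h₂ h₂
  · omega
  · exact h₁ ▸ hnext (h₁ ▸ hj)
  · exact hprev j h₂.symm
  · exact hl.getElem j hj

theorem List.exists_foldl_eq_append_drop {α : Type*} (f : List α → α → List α)
    (hf : ∀ st a, f st a = a :: st ∨ f st a = st.tail) (l st : List α) :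
    ∃ F k, l.foldl f st = F ++ st.drop k ∧ ∀ x ∈ F, x ∈ l := by
  induction l generalizing st with
  | nil => exact ⟨[], 0, by simp, by simp⟩
  | cons a l ih =>
    rcases hf st a with h | h
    · obtain ⟨F, k, hEq, hF⟩ := ih (a :: st)
      rw [foldl_cons, h, hEq]
      rcases k with _ | k
      · exact ⟨F ++ [a], 0, by simp, by grind⟩
      · exact ⟨F, k, by simp, fun x hx => mem_cons_of_mem _ (hF x hx)⟩
    · obtain ⟨F, k, hEq, hF⟩ := ih st.tail
      rw [foldl_cons, h, hEq, ← drop_one, drop_drop]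
      exact ⟨F, 1 + k, rfl, fun x hx => mem_cons_of_mem _ (hF x hx)⟩

theorem List.exists_eq_append_cons_cons_of_pairwise {α : Type*} {f : α → ℕ} {l : List α}
    (hl : l.Pairwise (f · < f ·)) {x y : α} (hx : x ∈ l) (hy : y ∈ l) (hxy : f x + 1 = f y) :
    ∃ l₁ l₂, l = l₁ ++ x :: y :: l₂ := by
  induction l with
  | nil => simp at hx
  | cons a t ih =>
    rw [pairwise_cons] at hl
    rcases mem_cons.1 hx with rfl | hxt
    · rcases t with _ | ⟨b, t⟩
      · simp_all
      rcases mem_cons.1 hy with rfl | hy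
      · omega
      rcases mem_cons.1 hy with rfl | hy
      · exact ⟨[], t, rfl⟩
      have := hl.1 b mem_cons_self
      have := (pairwise_cons.1 hl.2).1 y hy
      omega
    · rcases mem_cons.1 hy with rfl | hyt
      · have := hl.1 x hxt
        omega
      obtain ⟨l₁, l₂, rfl⟩ := ih hl.2 hxt hyt
      exact ⟨a :: l₁, l₂, rfl⟩

def IsColumn (n : ℕ) (c : List ℕ) : Prop :=
  c ≠ [] ∧ (∀ x ∈ c, 1 ≤ x ∧ x ≤ n) ∧ c.IsChain (· > ·)

/-- `cl` may stand immediately to the left of `cr`, the columns being aligned at the bottom. -/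
def ColumnsFit (cr cl : List ℕ) : Prop :=
  cl.length ≤ cr.length ∧
    ∀ r, r < cl.length → cr.getD (cr.length - 1 - r) 0 ≤ cl.getD (cl.length - 1 - r) 0

theorem isAntiSSYT_iff {n : ℕ} {T : List (List ℕ)} :
    IsAntiSSYT n T ↔ (∀ c ∈ T, IsColumn n c) ∧ T.IsChain ColumnsFit :=
  Iff.rfl

namespace IsColumn

variable {n : ℕ} {c : List ℕ}

theorem getD_le (hc : IsColumn n c) (k : ℕ) : c.getD k 0 ≤ n := by
  rcases lt_or_ge k c.length with h | h
  · rw [List.getD_eq_getElem _ _ h]; exact (hc.2.1 _ (List.getElem_mem _)).2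
  · rw [List.getD_eq_default _ _ h]; exact Nat.zero_le n

theorem getD_le_pred (hc : IsColumn n c) {k : ℕ} (h0 : 0 < k) (hk : k < c.length) :
    c.getD k 0 ≤ n - 1 := by
  have hlt := List.pairwise_iff_getElem.1 hc.2.2.pairwise 0 k (by omega) hk h0
  have hle := hc.getD_le 0
  rw [List.getD_eq_getElem _ _ hk]
  rw [List.getD_eq_getElem _ _ (by omega)] at hle
  omega

end IsColumn

theorem head_lt_of_colSign_eq_one {n : ℕ} {c : List ℕ} (h : colSign n c = 1) :
    ∀ z ∈ c.head?, z < n - 1 := by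
  rcases c with _ | ⟨z, t⟩
  · simp
  · simp only [colSign] at h
    split_ifs at h with h₁ h₂ <;> simp_all

theorem exists_eq_cons_le_of_colSign_ne_one {n : ℕ} {c : List ℕ} (hc : c.IsChain (· > ·))
    (h : colSign n c ≠ 1) : ∃ w t, c = w :: t ∧ n - 1 ≤ w := by
  rcases c with _ | ⟨w, t⟩
  · exact absurd rfl h
  refine ⟨w, t, rfl, ?_⟩
  simp only [colSign] at h
  split_ifs at h with h₁ h₂
  · rcases List.mem_cons.1 h₁.1 with hw | ht
    · omega
    · exact ((List.pairwise_cons.1 hc.pairwise).1 _ ht).le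
  · omega
  · omega

theorem isColumn_domino {n : ℕ} {c : List ℕ} (hn : 2 ≤ n) (hbd : ∀ x ∈ c, 1 ≤ x ∧ x ≤ n)
    (hch : c.IsChain (· > ·)) (hsign : colSign n c = 1) :
    IsColumn n (n :: (n - 1) :: c) := by
  refine ⟨List.cons_ne_nil _ _, ?_, ?_⟩
  · intro x hx
    rcases List.mem_cons.1 hx with rfl | hx
    · omega
    rcases List.mem_cons.1 hx with rfl | hx
    · omega
    · exact hbd x hx
  · exact .cons_cons (by omega) (List.isChain_cons.2 ⟨head_lt_of_colSign_eq_one hsign, hch⟩)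

theorem ColumnsFit.domino_right {n : ℕ} {cr cl : List ℕ} (h : ColumnsFit cr cl) :
    ColumnsFit (n :: (n - 1) :: cr) cl := by
  refine ⟨by simp only [List.length_cons]; have := h.1; omega, fun r hr => ?_⟩
  rw [List.getD_cons_cons_length_sub_one_sub _ _ _ _ (hr.trans_le h.1)]
  exact h.2 r hr

theorem ColumnsFit.domino_left {n : ℕ} {cr cl : List ℕ} (h : ColumnsFit cr cl)
    (hcr : IsColumn n cr) (hsr : colSign n cr ≠ 1) (hsl : colSign n cl = 1)
    (hevr : Even cr.length) (hevl : Even cl.length) :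
    ColumnsFit cr (n :: (n - 1) :: cl) := by
  obtain ⟨w, t, rfl, hw⟩ := exists_eq_cons_le_of_colSign_ne_one hcr.2.2 hsr
  have hlen : cl.length + 2 ≤ t.length + 1 := by
    have hne : cl.length ≠ t.length + 1 := by
      intro heq
      obtain ⟨z, s, rfl⟩ := List.exists_cons_of_length_pos (by omega : 0 < cl.length)
      have htop := h.2 s.length (by simp)
      simp only [List.length_cons] at heq htop
      rw [← heq, Nat.add_sub_cancel, Nat.sub_self, List.getD_cons_zero,
        List.getD_cons_zero] at htop
      have := head_lt_of_colSign_eq_one hsl z rfl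
      omega
    obtain ⟨a, ha⟩ := hevr
    obtain ⟨b, hb⟩ := hevl
    have := h.1
    simp only [List.length_cons] at ha this
    omega
  refine ⟨by simp only [List.length_cons]; omega, fun r hr => ?_⟩
  simp only [List.length_cons] at hr
  rcases (by omega : r < cl.length ∨ r = cl.length ∨ r = cl.length + 1) with hr | rfl | rfl
  · rw [List.getD_cons_cons_length_sub_one_sub _ _ _ _ hr]
    exact h.2 r hr
  · simp only [List.length_cons, show cl.length + 1 + 1 - 1 - cl.length = 1 by omega,
      List.getD_cons_succ, List.getD_cons_zero]
    exact hcr.getD_le_pred (by omega) (by simp only [List.length_cons]; omega)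
  · simp only [List.length_cons, show cl.length + 1 + 1 - 1 - (cl.length + 1) = 0 by omega,
      List.getD_cons_zero]
    exact hcr.getD_le _

namespace IsAntiSSYT

variable {n : ℕ} {T : List (List ℕ)}

theorem set_domino (hn : 2 ≤ n) (hT : IsAntiSSYT n T) (heven : ∀ c ∈ T, Even c.length)
    {i : ℕ} (hi : i < T.length) (hplus : colSign n (T.getD i []) = 1)
    (hprev : ∀ j, j + 1 = i → colSign n (T.getD j []) ≠ 1) :
    IsAntiSSYT n (T.set i (n :: (n - 1) :: T.getD i [])) := by
  obtain ⟨hcols, hchain⟩ := isAntiSSYT_iff.1 hT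
  rw [List.getD_eq_getElem _ _ hi] at hplus ⊢
  have hcol := hcols _ (List.getElem_mem hi)
  refine isAntiSSYT_iff.2 ⟨fun c hc => ?_, hchain.set hi (fun j hj => ?_) fun hi' => ?_⟩
  · rcases List.mem_or_eq_of_mem_set hc with hc | rfl
    · exact hcols c hc
    · exact isColumn_domino hn hcol.2.1 hcol.2.2 hplus
  · subst hj
    have hsign := hprev j rfl
    rw [List.getD_eq_getElem _ _ (by omega)] at hsign
    exact (hchain.getElem j hi).domino_left (hcols _ (List.getElem_mem _)) hsign hplus
      (heven _ (List.getElem_mem _)) (heven _ (List.getElem_mem _))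
  · exact (hchain.getElem i hi').domino_right

theorem append_domino (hn : 2 ≤ n) (hT : IsAntiSSYT n T) (heven : ∀ c ∈ T, Even c.length)
    (hprev : ∀ j, j + 1 = T.length → colSign n (T.getD j []) ≠ 1) :
    IsAntiSSYT n (T ++ [[n, n - 1]]) := by
  obtain ⟨hcols, hchain⟩ := isAntiSSYT_iff.1 hT
  refine isAntiSSYT_iff.2
    ⟨fun c hc => ?_, hchain.append (List.isChain_singleton _) fun cr hcr cl hcl => ?_⟩
  · rcases List.mem_append.1 hc with hc | hc
    · exact hcols c hc
    · rw [List.mem_singleton.1 hc]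
      exact isColumn_domino hn (by simp) List.isChain_nil rfl
  · rw [List.head?_cons, Option.mem_some_iff] at hcl
    subst hcl
    rw [List.getLast?_eq_getElem?, Option.mem_def, List.getElem?_eq_some_iff] at hcr
    obtain ⟨hlt, rfl⟩ := hcr
    have hsign := hprev (T.length - 1) (by omega)
    rw [List.getD_eq_getElem _ _ hlt] at hsign
    exact ColumnsFit.domino_left ⟨Nat.zero_le _, by simp⟩ (hcols _ (List.getElem_mem _)) hsign
      rfl (heven _ (List.getElem_mem _)) ⟨0, rfl⟩

end IsAntiSSYT

def signature (n : ℕ) (T : List (List ℕ)) : List (ℤ × ℕ) :=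
  (((T ++ [[]]).zipIdx.map Prod.swap).map fun p : ℕ × List ℕ => (colSign n p.2, p.1)).filter
    fun p : ℤ × ℕ => p.1 ≠ 0

def cancelStep (st : List (ℤ × ℕ)) (p : ℤ × ℕ) : List (ℤ × ℕ) :=
  if p.1 = -1 ∧ st.head?.map Prod.fst = some 1 then st.tail else p :: st

/-- `cancelStep` maintains the cancellation stack top first, hence the `reverse`. -/
def reducedSignature (n : ℕ) (T : List (List ℕ)) : List (ℤ × ℕ) :=
  ((signature n T).foldl cancelStep []).reverse

theorem ftn_eq (n : ℕ) (T : List (List ℕ)) :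
    ftn n T =
      match (reducedSignature n T).find? (fun p : ℤ × ℕ => p.1 = 1) with
      | some p =>
        if p.2 < T.length then T.set p.2 (n :: (n - 1) :: T.getD p.2 [])
        else T ++ [[n, n - 1]]
      | none => T :=
  rfl

theorem cancelStep_eq_cons_or_tail (st : List (ℤ × ℕ)) (p : ℤ × ℕ) :
    cancelStep st p = p :: st ∨ cancelStep st p = st.tail := by
  unfold cancelStep
  split_ifs
  exacts [.inr rfl, .inl rfl]

theorem cancelStep_of_fst_eq_one (st : List (ℤ × ℕ)) {p : ℤ × ℕ} (hp : p.1 = 1) :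
    cancelStep st p = p :: st :=
  if_neg fun h => by simp [hp] at h

theorem mem_of_mem_foldl_cancelStep {l : List (ℤ × ℕ)} {x : ℤ × ℕ}
    (hx : x ∈ l.foldl cancelStep []) : x ∈ l := by
  obtain ⟨F, k, hEq, hF⟩ := List.exists_foldl_eq_append_drop _ cancelStep_eq_cons_or_tail l []
  rw [hEq, List.drop_nil, List.append_nil] at hx
  exact hF x hx

/-- A `+` immediately preceded by a `+` is never the first `+` of the reduced signature: the
earlier `+` stays directly below it on the stack for as long as it is not cancelled. -/
theorem find?_reverse_foldl_cancelStep_ne {l₁ l₂ : List (ℤ × ℕ)} {a b : ℤ × ℕ}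
    (hnd : (l₁ ++ a :: b :: l₂).Nodup) (ha : a.1 = 1) (hb : b.1 = 1) :
    ((l₁ ++ a :: b :: l₂).foldl cancelStep []).reverse.find? (fun p : ℤ × ℕ => p.1 = 1) ≠
      some b := by
  intro hfind
  have hb₁ : b ∉ l₁ := fun h => by grind
  have hb₂ : b ∉ l₂ := fun h => by grind
  have hab : b ≠ a := fun h => by grind
  obtain ⟨F, k, hst, hF⟩ := List.exists_foldl_eq_append_drop _ cancelStep_eq_cons_or_tail l₂
    (b :: a :: l₁.foldl cancelStep [])
  rw [List.foldl_append, List.foldl_cons, List.foldl_cons, cancelStep_of_fst_eq_one _ ha,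
    cancelStep_of_fst_eq_one _ hb, hst] at hfind
  rcases k with _ | k
  · obtain ⟨y, hy⟩ : ∃ y, ((l₁.foldl cancelStep []).reverse ++ [a]).find?
        (fun p : ℤ × ℕ => p.1 = 1) = some y :=
      Option.isSome_iff_exists.1 (List.find?_isSome.2 ⟨a, by simp, by simp [ha]⟩)
    have hrev : (F ++ b :: a :: l₁.foldl cancelStep []).reverse =
        ((l₁.foldl cancelStep []).reverse ++ [a]) ++ b :: F.reverse := by
      simp
    rw [List.drop_zero, hrev, List.find?_append, hy, Option.some_or] at hfind
    cases hfind
    rcases List.mem_append.1 (List.mem_of_find?_eq_some hy) with h | h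
    · exact hb₁ (mem_of_mem_foldl_cancelStep (List.mem_reverse.1 h))
    · exact hab (List.mem_singleton.1 h)
  · rcases List.mem_append.1 (List.mem_reverse.1 (List.mem_of_find?_eq_some hfind)) with h | h
    · exact hb₂ (hF b h)
    rw [List.drop_succ_cons] at h
    rcases List.mem_cons.1 (List.mem_of_mem_drop h) with h | h
    · exact hab h
    · exact hb₁ (mem_of_mem_foldl_cancelStep h)

theorem mem_signature_iff {n : ℕ} {T : List (List ℕ)} {x : ℤ × ℕ} :
    x ∈ signature n T ↔
      x.2 < T.length + 1 ∧ colSign n ((T ++ [[]]).getD x.2 []) = x.1 ∧ x.1 ≠ 0 := by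
  obtain ⟨s, i⟩ := x
  simp only [signature, List.mem_filter, List.map_map, List.mem_map, List.mem_zipIdx_iff_getElem?,
    Function.comp_apply, Prod.fst_swap, Prod.snd_swap, Prod.mk.injEq, decide_eq_true_eq]
  have hlen : (T ++ [[]]).length = T.length + 1 := by simp
  constructor
  · rintro ⟨⟨⟨c, i⟩, hc, rfl, rfl⟩, hs⟩
    obtain ⟨hlt, hget⟩ := List.getElem?_eq_some_iff.1 hc
    exact ⟨hlen ▸ hlt, by rw [List.getD_eq_getElem _ _ hlt, hget], hs⟩
  · rintro ⟨hlt, rfl, hs⟩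
    exact ⟨⟨⟨_, i⟩, List.getElem?_eq_getElem (hlen ▸ hlt), by rw [List.getD_eq_getElem], rfl⟩, hs⟩

theorem signature_pairwise (n : ℕ) (T : List (List ℕ)) :
    (signature n T).Pairwise (·.2 < ·.2) := by
  refine List.Pairwise.sublist List.filter_sublist ?_
  rw [List.pairwise_map, List.pairwise_map, List.pairwise_iff_getElem]
  intro i j hi hj hij
  simpa [List.getElem_zipIdx] using hij

theorem ftn_cases (n : ℕ) (T : List (List ℕ)) :
    ftn n T = T ∨
      ∃ i ≤ T.length, colSign n ((T ++ [[]]).getD i []) = 1 ∧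
        (∀ j, j + 1 = i → colSign n (T.getD j []) ≠ 1) ∧
        ftn n T = if i < T.length then T.set i (n :: (n - 1) :: T.getD i [])
          else T ++ [[n, n - 1]] := by
  rw [ftn_eq]
  rcases hfind : (reducedSignature n T).find? (fun p : ℤ × ℕ => p.1 = 1) with _ | p
  · exact .inl rfl
  have hp1 : p.1 = 1 := by simpa using List.find?_some hfind
  have hp : p ∈ signature n T :=
    mem_of_mem_foldl_cancelStep (List.mem_reverse.1 (List.mem_of_find?_eq_some hfind))
  obtain ⟨hlt, hsign, -⟩ := mem_signature_iff.1 hp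
  refine .inr ⟨p.2, by omega, hsign.trans hp1, fun j hj hj1 => ?_, rfl⟩
  have hmem : ((1 : ℤ), j) ∈ signature n T := by
    rw [mem_signature_iff, List.getD_append _ _ _ _ (by omega)]
    exact ⟨by omega, hj1, one_ne_zero⟩
  obtain ⟨l₁, l₂, hsplit⟩ :=
    List.exists_eq_append_cons_cons_of_pairwise (signature_pairwise n T) hmem hp hj
  have hnd : (signature n T).Nodup :=
    (signature_pairwise n T).imp fun h => ne_of_apply_ne Prod.snd h.ne
  rw [hsplit] at hnd
  exact find?_reverse_foldl_cancelStep_ne hnd rfl hp1 (hsplit ▸ hfind)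

/-- The operator `f̃_n` sends a semistandard tableau of anti-normal shape with even
conjugate shape to another such tableau. -/
theorem stmt13 (n : ℕ) (hn : 4 ≤ n) (T : List (List ℕ))
    (h1 : IsAntiSSYT n T) (h2 : ∀ col ∈ T, Even col.length) :
    IsAntiSSYT n (ftn n T) ∧ ∀ col ∈ ftn n T, Even col.length := by
  rcases ftn_cases n T with hft | ⟨i, hi, hplus, hprev, hft⟩
  · rw [hft]
    exact ⟨h1, h2⟩
  rw [hft]
  split_ifs with hiT
  · rw [List.getD_append _ _ _ _ hiT] at hplus
    refine ⟨h1.set_domino (by omega) h2 hiT hplus hprev, fun c hc => ?_⟩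
    rcases List.mem_or_eq_of_mem_set hc with hc | rfl
    · exact h2 c hc
    · rw [List.getD_eq_getElem _ _ hiT]
      exact (h2 _ (List.getElem_mem hiT)).add even_two
  · obtain rfl : i = T.length := by omega
    refine ⟨h1.append_domino (by omega) h2 hprev, fun c hc => ?_⟩
    rcases List.mem_append.1 hc with hc | hc
    · exact h2 c hc
    · rw [List.mem_singleton.1 hc]
      exact even_two
end

section
/- Let 𝒟 be the set of 0/1-arrays on the rows 1,…,n−1 of the triangle Δ_n satisfying: (1) the three entries in the first two rows are 0; (2) row r contains exactly r−2 ones for 3 ≤ r ≤ n−1; (3) between any two consecutive 1's in row r (3 < r) there is exactly one 1 in row r−1, and between any two consecutive 1's in row r (r < n−1) there is exactly one 1 in row r+1; (4) a boundary alternation condition in row n−1. Then the map sending a double path p at the top vertex θ to the 0/1-array d(p) whose entry is 0 exactly at points of p is a bijection from the set of double paths at θ onto 𝒟. -/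
/-- One step down in the triangle `Δ_n`: from `ε_k + ε_{l+1}` (with `k < l`) one may go to
`ε_{k+1} + ε_{l+1}` or to `ε_k + ε_l`.  Points are encoded as pairs `(i,j)` with `i < j`. -/
def PStep (p q : ℕ × ℕ) : Prop :=
  p.1 + 1 < p.2 ∧ (q = (p.1 + 1, p.2) ∨ q = (p.1, p.2 - 1))

/-- A path in `Δ_n`. -/
def IsPath (n : ℕ) (P : List (ℕ × ℕ)) : Prop :=
  P ≠ [] ∧ (∀ x ∈ P, 1 ≤ x.1 ∧ x.1 < x.2 ∧ x.2 ≤ n) ∧ P.Chain' PStep ∧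
    ∃ k, P.getLast? = some (k, k + 1)

/-- A double path at `β` in `Δ_n`. -/
def DoublePathAt (n : ℕ) (β : ℕ × ℕ) (P1 P2 : List (ℕ × ℕ)) : Prop :=
  IsPath n P1 ∧ IsPath n P2 ∧ P1.length = P2.length ∧
  P1.head? = some β ∧ P2.head? = some β ∧
  (∀ t, 1 ≤ t → t < P1.length →
    (P2.getD t (0, 0)).1 + (P2.getD t (0, 0)).2 <
      (P1.getD t (0, 0)).1 + (P1.getD t (0, 0)).2) ∧
  ∃ k, P1.getLast? = some (k + 1, k + 2) ∧ P2.getLast? = some (k, k + 1)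

/-- A double path (at some point) in `Δ_n`. -/
def DoublePath (n : ℕ) (P1 P2 : List (ℕ × ℕ)) : Prop :=
  ∃ β, DoublePathAt n β P1 P2

/-- The set `𝒟` of 0/1-arrays (encoded as `d : ℕ → ℕ → Bool`, where `d r i` is the entry
in row `r` of `Δ_n` counted from the top, at the `i`-th position from the right, i.e. at
the point `(i, n - r + i)`):
(1) all entries in the first two rows are `0` (and `d` is supported on the triangle);
(2) row `r` contains exactly `r - 2` ones for `3 ≤ r ≤ n-1`;
(3) strictly between two consecutive `1`'s of row `r` there is exactly one `1` in row
`r-1` (if `r > 3`) and exactly one `1` in row `r+1` (if `r < n-1`);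
(4) the bottom-row labels `n, n-1, n, …` (read right to left) attached to the `1`'s of row
`n-1` are `n, n-1, n, …`, i.e. the `t`-th one from the right sits at a position `i ≡ t`
(mod 2). -/
def Dset (n : ℕ) : Set (ℕ → ℕ → Bool) :=
  {d |
    (∀ r i, d r i = true → 1 ≤ i ∧ i ≤ r ∧ 3 ≤ r ∧ r ≤ n - 1) ∧
    (∀ r, 3 ≤ r → r ≤ n - 1 →
      ((Finset.Icc 1 r).filter fun i => d r i = true).card = r - 2) ∧
    (∀ r i i', d r i = true → d r i' = true → i < i' →
      (∀ i'', i < i'' → i'' < i' → d r i'' = false) →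
      ((3 < r → ((Finset.Icc i (i' - 1)).filter fun k => d (r - 1) k = true).card = 1) ∧
       (r < n - 1 → ((Finset.Icc (i + 1) i').filter fun k => d (r + 1) k = true).card = 1))) ∧
    (∀ i, d (n - 1) i = true →
      ((Finset.Icc 1 i).filter fun k => d (n - 1) k = true).card % 2 = i % 2)}

/-- The array `d(p)` of a double path `p = (P1, P2)` at the top vertex `θ = ε_1 + ε_n`:
`0` exactly at the points of the triangle lying on `p`, and `1` at all other points. -/
def dOf (n : ℕ) (P1 P2 : List (ℕ × ℕ)) : ℕ → ℕ → Bool :=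
  fun r i => decide (1 ≤ i ∧ i ≤ r ∧ r ≤ n - 1 ∧ (i, n - r + i) ∉ P1 ++ P2)

/-!
A double path at `θ = (1, n)` meets every row `r = 1, …, n - 1` of `Δ_n` exactly once on each of
its two paths, so it is determined by the positions `A r > B r` (counted from the right) of the
two paths in row `r`: both move by `0` or `1` from one row to the next, and they end adjacent.
Hence `d(p)` has exactly the two zeros `A r`, `B r` in each row, which is what (1) and (2) say.
Conversely, reading off the two zeros of each row of `d ∈ 𝒟` recovers `A` and `B`. Condition (3)
makes the zeros of consecutive rows move by at most one: two adjacent ones of row `r + 1` sit over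
a one of row `r`, and an isolated zero of row `r + 1` is straddled by exactly one zero of row `r`.
Condition (4) makes the two zeros of the last row adjacent: otherwise the one just left of the
right zero is preceded by exactly one zero, which breaks the parity.
-/

open Finset

-- Stated with explicit indicators so that `split_ifs` and `omega` can consume it.
lemma card_filter_Icc_of_iff_ne_and_ne {l u x y : ℕ} (hxy : x ≠ y) {p : ℕ → Prop}
    [DecidablePred p] (hp : ∀ k, l ≤ k → k ≤ u → (p k ↔ k ≠ x ∧ k ≠ y)) :
    #{k ∈ Icc l u | p k} + ((if l ≤ x ∧ x ≤ u then 1 else 0) + if l ≤ y ∧ y ≤ u then 1 else 0)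
      = u + 1 - l := by
  have herase : {k ∈ Icc l u | p k} = ((Icc l u).erase x).erase y := by
    ext k
    simp only [mem_filter, mem_erase, mem_Icc]
    constructor
    · rintro ⟨hk, hpk⟩
      exact ⟨((hp k hk.1 hk.2).1 hpk).2, ((hp k hk.1 hk.2).1 hpk).1, hk⟩
    · rintro ⟨hky, hkx, hk⟩
      exact ⟨hk, (hp k hk.1 hk.2).2 ⟨hkx, hky⟩⟩
  rw [herase, card_erase_eq_ite, card_erase_eq_ite, Nat.card_Icc]
  simp only [mem_erase, mem_Icc]
  split_ifs <;> omega

-- The path meeting row `r` (the diagonal `j - i = n - r`) at position `f r` from the right,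
-- for `r = 1, …, n - 1`.
def rowPath (n : ℕ) (f : ℕ → ℕ) : List (ℕ × ℕ) :=
  (List.range' 1 (n - 1)).map fun r => (f r, n - r + f r)

section rowPath

variable {n : ℕ} {f g : ℕ → ℕ}

@[simp]
lemma length_rowPath : (rowPath n f).length = n - 1 := by
  simp [rowPath]

lemma getElem_rowPath {t : ℕ} (h : t < (rowPath n f).length) :
    (rowPath n f)[t] = (f (t + 1), n - (t + 1) + f (t + 1)) := by
  simp [rowPath, add_comm]

lemma mem_rowPath {x : ℕ × ℕ} :
    x ∈ rowPath n f ↔ ∃ r, 1 ≤ r ∧ r ≤ n - 1 ∧ x = (f r, n - r + f r) := by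
  simp only [rowPath, List.mem_map, List.mem_range'_1]
  constructor
  · rintro ⟨r, hr, rfl⟩
    exact ⟨r, hr.1, by omega, rfl⟩
  · rintro ⟨r, hr1, hr, rfl⟩
    exact ⟨r, ⟨hr1, by omega⟩, rfl⟩

lemma head?_rowPath (hn : 2 ≤ n) : (rowPath n f).head? = some (f 1, n - 1 + f 1) := by
  rw [List.head?_eq_getElem?, List.getElem?_eq_getElem (by simp; omega), getElem_rowPath]

lemma getLast?_rowPath (hn : 2 ≤ n) :
    (rowPath n f).getLast? = some (f (n - 1), 1 + f (n - 1)) := by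
  rw [List.getLast?_eq_getElem?, List.getElem?_eq_getElem (by simp; omega), getElem_rowPath]
  simp only [length_rowPath, Option.some.injEq, Prod.mk.injEq]
  constructor <;> congr 2 <;> omega

lemma rowPath_congr (h : ∀ r, 1 ≤ r → r ≤ n - 1 → f r = g r) : rowPath n f = rowPath n g := by
  refine List.map_congr_left fun r hr => ?_
  rw [List.mem_range'_1] at hr
  rw [h r hr.1 (by omega)]

end rowPath

-- Each step lowers `j - i` by one.
lemma List.IsChain.pStep_diag {L : List (ℕ × ℕ)} (hL : L.IsChain PStep) :
    ∀ t (ht : t < L.length), L[t].2 + t + (L[0]'(by omega)).1 = (L[0]'(by omega)).2 + L[t].1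
  | 0, _ => by omega
  | t + 1, ht => by
    have hstep : PStep L[t] L[t + 1] := List.isChain_iff_getElem.1 hL t ht
    have := hL.pStep_diag t (by omega)
    obtain ⟨hlt, h | h⟩ := hstep <;> rw [h] <;> dsimp only <;> omega

structure IsPathProfile (n : ℕ) (f : ℕ → ℕ) : Prop where
  one : f 1 = 1
  step : ∀ r, 1 ≤ r → r + 1 ≤ n - 1 → f (r + 1) = f r ∨ f (r + 1) = f r + 1

namespace IsPathProfile

variable {n : ℕ} {f : ℕ → ℕ}

lemma bounds (hf : IsPathProfile n f) {r : ℕ} (hr : 1 ≤ r) (hrn : r ≤ n - 1) :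
    1 ≤ f r ∧ f r ≤ r := by
  induction r, hr using Nat.le_induction with
  | base => simp [hf.one]
  | succ r hr ih =>
    have := ih (by omega)
    rcases hf.step r hr hrn with h | h <;> omega

lemma isPath_rowPath (hn : 2 ≤ n) (hf : IsPathProfile n f) : IsPath n (rowPath n f) := by
  refine ⟨?_, ?_, ?_, ⟨f (n - 1), ?_⟩⟩
  · rw [← List.length_pos_iff, length_rowPath]
    omega
  · intro x hx
    obtain ⟨r, hr1, hrn, rfl⟩ := mem_rowPath.1 hx
    have := hf.bounds hr1 hrn
    dsimp only
    omega
  · refine List.isChain_iff_getElem.2 fun t ht => ?_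
    rw [length_rowPath] at ht
    rw [getElem_rowPath, getElem_rowPath]
    have := hf.bounds (r := t + 1) (by omega) (by omega)
    refine ⟨by dsimp only; omega, ?_⟩
    rcases hf.step (t + 1) (by omega) (by omega) with h | h
    · right; rw [h]; congr 1; omega
    · left; rw [h]; congr 1; omega
  · rw [getLast?_rowPath hn, add_comm]

end IsPathProfile

lemma IsPath.exists_rowPath {n : ℕ} {P : List (ℕ × ℕ)} (hP : IsPath n P)
    (hhead : P.head? = some (1, n)) : ∃ f, IsPathProfile n f ∧ P = rowPath n f := by
  obtain ⟨hne, -, hchain, k, hlast⟩ := hP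
  have h0 : 0 < P.length := List.length_pos_iff.2 hne
  have hP0 : P[0] = (1, n) := by
    rwa [List.head?_eq_getElem?, List.getElem?_eq_getElem h0, Option.some.injEq] at hhead
  have hdiag : ∀ t (ht : t < P.length), P[t].2 + t + 1 = n + P[t].1 := fun t ht => by
    simpa [hP0] using hchain.pStep_diag t ht
  have hlen : P.length = n - 1 := by
    have hm : P.length - 1 < P.length := by omega
    rw [List.getLast?_eq_getElem?, List.getElem?_eq_getElem hm, Option.some.injEq] at hlast
    have := hdiag _ hm
    rw [hlast] at this
    dsimp only at this
    omega
  refine ⟨fun r => (P.getD (r - 1) (0, 0)).1, ⟨?_, fun r hr hrn => ?_⟩, ?_⟩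
  · simp only [Nat.sub_self, List.getD_eq_getElem _ _ h0, hP0]
  · have hstep : PStep P[r - 1] P[r] := by
      simpa only [Nat.sub_add_cancel hr] using
        List.isChain_iff_getElem.1 hchain (r - 1) (by omega)
    simp only [Nat.add_sub_cancel, List.getD_eq_getElem _ _ (show r - 1 < P.length by omega),
      List.getD_eq_getElem _ _ (show r < P.length by omega)]
    obtain ⟨-, h | h⟩ := hstep <;> rw [h] <;> omega
  · refine List.ext_getElem (by simp [hlen]) fun t ht _ => ?_
    have := hdiag t ht
    rw [getElem_rowPath]
    simp only [Nat.add_sub_cancel, List.getD_eq_getElem _ _ ht]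
    ext <;> dsimp only; omega

structure IsDoublePathProfile (n : ℕ) (A B : ℕ → ℕ) : Prop where
  fst : IsPathProfile n A
  snd : IsPathProfile n B
  lt : ∀ r, 2 ≤ r → r ≤ n - 1 → B r < A r
  last : A (n - 1) = B (n - 1) + 1

lemma doublePathAt_top_iff {n : ℕ} (hn : 2 ≤ n) {P1 P2 : List (ℕ × ℕ)} :
    DoublePathAt n (1, n) P1 P2 ↔
      ∃ A B, IsDoublePathProfile n A B ∧ P1 = rowPath n A ∧ P2 = rowPath n B := by
  constructor
  · rintro ⟨hP1, hP2, -, hh1, hh2, hsum, k, hl1, hl2⟩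
    obtain ⟨A, hA, rfl⟩ := hP1.exists_rowPath hh1
    obtain ⟨B, hB, rfl⟩ := hP2.exists_rowPath hh2
    rw [getLast?_rowPath hn, Option.some.injEq, Prod.mk.injEq] at hl1 hl2
    refine ⟨A, B, ⟨hA, hB, fun r hr hrn => ?_, by omega⟩, rfl, rfl⟩
    have := hsum (r - 1) (by omega) (by simp; omega)
    simp only [List.getD_eq_getElem _ _ (show r - 1 < (rowPath n _).length by simp; omega),
      getElem_rowPath, Nat.sub_add_cancel (show 1 ≤ r by omega)] at this
    omega
  · rintro ⟨A, B, h, rfl, rfl⟩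
    refine ⟨h.fst.isPath_rowPath hn, h.snd.isPath_rowPath hn, by simp, ?_, ?_,
      fun t ht htn => ?_, B (n - 1), ?_, ?_⟩
    · rw [head?_rowPath hn, h.fst.one, Nat.sub_add_cancel (by omega)]
    · rw [head?_rowPath hn, h.snd.one, Nat.sub_add_cancel (by omega)]
    · rw [length_rowPath] at htn
      simp only [List.getD_eq_getElem _ _ (show t < (rowPath n _).length by simp; omega),
        getElem_rowPath]
      have := h.lt (t + 1) (by omega) (by omega)
      omega
    · rw [getLast?_rowPath hn, h.last]
      congr 2
      omega
    · rw [getLast?_rowPath hn, add_comm]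

def zeroArray (n : ℕ) (A B : ℕ → ℕ) : ℕ → ℕ → Bool :=
  fun r i => decide (1 ≤ i ∧ i ≤ r ∧ r ≤ n - 1 ∧ i ≠ A r ∧ i ≠ B r)

@[simp]
lemma zeroArray_eq_true {n : ℕ} {A B : ℕ → ℕ} {r i : ℕ} :
    zeroArray n A B r i = true ↔ 1 ≤ i ∧ i ≤ r ∧ r ≤ n - 1 ∧ i ≠ A r ∧ i ≠ B r := by
  simp [zeroArray]

lemma dOf_rowPath {n : ℕ} (A B : ℕ → ℕ) :
    dOf n (rowPath n A) (rowPath n B) = zeroArray n A B := by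
  funext r i
  simp only [dOf, zeroArray, decide_eq_decide, List.mem_append, mem_rowPath, Prod.mk.injEq]
  constructor
  · rintro ⟨h1, hi, hr, hnot⟩
    refine ⟨h1, hi, hr, fun h => hnot (Or.inl ⟨r, ?_⟩), fun h => hnot (Or.inr ⟨r, ?_⟩)⟩ <;>
      exact ⟨by omega, hr, h, by rw [h]⟩
  · rintro ⟨h1, hi, hr, hA, hB⟩
    refine ⟨h1, hi, hr, ?_⟩
    rintro (⟨r', -, hr', h, h'⟩ | ⟨r', -, hr', h, h'⟩) <;>
    · obtain rfl : r = r' := by omega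
      omega

def RowBounds (n : ℕ) (A B : ℕ → ℕ) : Prop :=
  ∀ r, 1 ≤ r → r ≤ n - 1 → 1 ≤ B r ∧ B r ≤ A r ∧ A r ≤ r ∧ (2 ≤ r → B r < A r)

lemma card_filter_zeroArray {n : ℕ} {A B : ℕ → ℕ} {r l u : ℕ} (hAB : A r ≠ B r) (hl : 1 ≤ l)
    (hu : u ≤ r) (hr : r ≤ n - 1) :
    #{k ∈ Icc l u | zeroArray n A B r k = true} +
        ((if l ≤ A r ∧ A r ≤ u then 1 else 0) + if l ≤ B r ∧ B r ≤ u then 1 else 0)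
      = u + 1 - l :=
  card_filter_Icc_of_iff_ne_and_ne hAB fun k hk hk' => by rw [zeroArray_eq_true]; omega

namespace IsDoublePathProfile

variable {n : ℕ} {A B : ℕ → ℕ}

lemma rowBounds (h : IsDoublePathProfile n A B) : RowBounds n A B := fun r hr hrn => by
  have := h.fst.bounds hr hrn
  have := h.snd.bounds hr hrn
  have := h.lt r
  have := h.fst.one
  have := h.snd.one
  omega

lemma zeroArray_support (h : IsDoublePathProfile n A B) {r i : ℕ}
    (hri : zeroArray n A B r i = true) : 1 ≤ i ∧ i ≤ r ∧ 3 ≤ r ∧ r ≤ n - 1 := by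
  rw [zeroArray_eq_true] at hri
  refine ⟨hri.1, hri.2.1, ?_, hri.2.2.1⟩
  by_contra hr
  obtain rfl | rfl : r = 1 ∨ r = 2 := by omega
  · have := h.rowBounds 1 le_rfl hri.2.2.1
    omega
  · have := h.rowBounds 2 (by omega) hri.2.2.1
    omega

lemma card_filter_zeroArray_row (h : IsDoublePathProfile n A B) {r : ℕ} (hr : 3 ≤ r)
    (hrn : r ≤ n - 1) : #{i ∈ Icc 1 r | zeroArray n A B r i = true} = r - 2 := by
  have := h.rowBounds r (by omega) hrn
  have := card_filter_zeroArray (A := A) (B := B) (l := 1) (u := r) (by omega) le_rfl le_rfl hrn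
  split_ifs at this <;> omega

lemma zeroArray_interlace (h : IsDoublePathProfile n A B) {r i i' : ℕ}
    (hi : zeroArray n A B r i = true) (hi' : zeroArray n A B r i' = true) (hii' : i < i')
    (hbetween : ∀ j, i < j → j < i' → zeroArray n A B r j = false) :
    (3 < r → #{k ∈ Icc i (i' - 1) | zeroArray n A B (r - 1) k = true} = 1) ∧
      (r < n - 1 → #{k ∈ Icc (i + 1) i' | zeroArray n A B (r + 1) k = true} = 1) := by
  rw [zeroArray_eq_true] at hi hi'
  have hzero : ∀ j, i < j → j < i' → j = A r ∨ j = B r := fun j hj hj' => by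
    have := hbetween j hj hj'
    rw [← Bool.not_eq_true, zeroArray_eq_true] at this
    omega
  have := hzero (i + 1)
  have := hzero (i + 2)
  have := hzero (i + 3)
  have := h.rowBounds r (by omega) hi.2.2.1
  constructor
  · intro hr
    obtain ⟨m, rfl⟩ : ∃ m, r = m + 1 := ⟨r - 1, by omega⟩
    have := h.rowBounds m (by omega) (by omega)
    have := h.fst.step m (by omega) (by omega)
    have := h.snd.step m (by omega) (by omega)
    have := card_filter_zeroArray (A := A) (B := B) (l := i) (u := i' - 1)
      (show A m ≠ B m by omega) (by omega) (by omega) (show m ≤ n - 1 by omega)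
    rw [Nat.add_sub_cancel]
    split_ifs at this <;> omega
  · intro hr
    have := h.rowBounds (r + 1) (by omega) (by omega)
    have := h.fst.step r (by omega) (by omega)
    have := h.snd.step r (by omega) (by omega)
    have := card_filter_zeroArray (A := A) (B := B) (l := i + 1) (u := i')
      (show A (r + 1) ≠ B (r + 1) by omega) (by omega) (by omega) (show r + 1 ≤ n - 1 by omega)
    split_ifs at this <;> omega

lemma zeroArray_parity (h : IsDoublePathProfile n A B) {i : ℕ}
    (hi : zeroArray n A B (n - 1) i = true) :
    #{k ∈ Icc 1 i | zeroArray n A B (n - 1) k = true} % 2 = i % 2 := by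
  rw [zeroArray_eq_true] at hi
  have := h.rowBounds (n - 1) (by omega) le_rfl
  have := h.last
  have := card_filter_zeroArray (A := A) (B := B) (l := 1) (u := i)
    (show A (n - 1) ≠ B (n - 1) by omega) le_rfl hi.2.1 le_rfl
  split_ifs at this <;> omega

lemma zeroArray_mem_Dset (h : IsDoublePathProfile n A B) : zeroArray n A B ∈ Dset n :=
  ⟨fun _ _ => h.zeroArray_support, fun _ => h.card_filter_zeroArray_row,
    fun _ _ _ hi hi' hii' hbetween => h.zeroArray_interlace hi hi' hii' hbetween,
    fun _ => h.zeroArray_parity⟩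

end IsDoublePathProfile

lemma exists_two_zeros_of_card_filter {r : ℕ} {p : ℕ → Bool}
    (hsupp : ∀ i, p i = true → 1 ≤ i ∧ i ≤ r) (hcard : #{i ∈ Icc 1 r | p i = true} + 2 = r) :
    ∃ a b, 1 ≤ b ∧ b < a ∧ a ≤ r ∧ ∀ i, p i = true ↔ 1 ≤ i ∧ i ≤ r ∧ i ≠ a ∧ i ≠ b := by
  have hzeros : #{i ∈ Icc 1 r | ¬p i = true} = 2 := by
    have := card_filter_add_card_filter_not (s := Icc 1 r) (fun i => p i = true)
    rw [Nat.card_Icc] at this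
    omega
  obtain ⟨x, y, hxy, hxy'⟩ := card_eq_two.1 hzeros
  have hmem : ∀ i, (1 ≤ i ∧ i ≤ r) ∧ p i = false ↔ i = x ∨ i = y := fun i => by
    simpa using congrArg (i ∈ ·) hxy'
  have hx := (hmem x).2 (Or.inl rfl)
  have hy := (hmem y).2 (Or.inr rfl)
  refine ⟨max x y, min x y, by omega, by omega, by omega, fun i => ?_⟩
  have hi := hmem i
  cases hpi : p i
  · simp only [hpi, and_true, Bool.false_eq_true, false_iff] at hi ⊢
    omega
  · have := hsupp i hpi
    simp only [hpi, Bool.true_eq_false, and_false, false_iff, true_iff] at hi ⊢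
    omega

lemma exists_row_zeros_of_mem_Dset {n : ℕ} {d : ℕ → ℕ → Bool} (hd : d ∈ Dset n) (r : ℕ) :
    ∃ a b, (1 ≤ r → r ≤ n - 1 → 1 ≤ b ∧ b ≤ a ∧ a ≤ r ∧ (2 ≤ r → b < a)) ∧
      ∀ i, d r i = true ↔ 1 ≤ i ∧ i ≤ r ∧ r ≤ n - 1 ∧ i ≠ a ∧ i ≠ b := by
  have hsupp := hd.1 r
  by_cases hr : 2 ≤ r ∧ r ≤ n - 1
  · have hcard : #{i ∈ Icc 1 r | d r i = true} + 2 = r := by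
      by_cases hr3 : 3 ≤ r
      · have := hd.2.1 r hr3 hr.2
        omega
      · rw [filter_false_of_mem fun i _ hi => by have := hsupp i hi; omega]
        simp only [card_empty]
        omega
    obtain ⟨a, b, hb, hba, ha, hab⟩ :=
      exists_two_zeros_of_card_filter (fun i hi => by have := hsupp i hi; omega) hcard
    refine ⟨a, b, fun _ _ => ⟨hb, hba.le, ha, fun _ => hba⟩, fun i => ?_⟩
    rw [hab]
    omega
  · refine ⟨1, 1, fun _ _ => by omega, fun i => ⟨fun hi => ?_, fun hi => by omega⟩⟩
    have := hsupp i hi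
    omega

lemma exists_zeroArray_eq_of_mem_Dset {n : ℕ} {d : ℕ → ℕ → Bool} (hd : d ∈ Dset n) :
    ∃ A B, RowBounds n A B ∧ d = zeroArray n A B := by
  choose A B hAB using exists_row_zeros_of_mem_Dset hd
  exact ⟨A, B, fun r => (hAB r).1,
    funext₂ fun r i => Bool.eq_iff_iff.2 (((hAB r).2 i).trans zeroArray_eq_true.symm)⟩

namespace RowBounds

variable {n : ℕ} {A B : ℕ → ℕ}

lemma zeroArray_step (hAB : RowBounds n A B) (hd : zeroArray n A B ∈ Dset n) {r : ℕ}
    (hr : 3 ≤ r) (hrn : r + 1 ≤ n - 1) :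
    (A (r + 1) = A r ∨ A (r + 1) = A r + 1) ∧ (B (r + 1) = B r ∨ B (r + 1) = B r + 1) := by
  have hb := hAB r (by omega) (by omega)
  have hb' := hAB (r + 1) (by omega) hrn
  have hcount : ∀ i i', zeroArray n A B (r + 1) i = true → zeroArray n A B (r + 1) i' = true →
      i < i' → (∀ j, i < j → j < i' → j = A (r + 1) ∨ j = B (r + 1)) →
      #{k ∈ Icc i (i' - 1) | zeroArray n A B r k = true} = 1 := by
    intro i i' hi hi' hii' hbetween
    refine (hd.2.2.1 (r + 1) i i' hi hi' hii' fun j hj hj' => ?_).1 (by omega)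
    have := zeroArray_eq_true.1 hi'
    have := hbetween j hj hj'
    rw [← Bool.not_eq_true, zeroArray_eq_true]
    omega
  have hadjacent_ones : ∀ z, z = A r ∨ z = B r →
      z = A (r + 1) ∨ z = B (r + 1) ∨ z + 1 = A (r + 1) ∨ z + 1 = B (r + 1) := by
    intro z hz
    by_contra hne
    have h1 := hcount z (z + 1) (by simp; omega) (by simp; omega) (by omega) (by omega)
    have h2 := card_filter_zeroArray (A := A) (B := B) (l := z) (u := z + 1 - 1)
      (show A r ≠ B r by omega) (by omega) (by omega) (show r ≤ n - 1 by omega)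
    split_ifs at h2 <;> omega
  have hisolated_zero : ∀ z, z = A (r + 1) ∨ z = B (r + 1) → 2 ≤ z → z + 1 ≤ r + 1 →
      z - 1 ≠ A (r + 1) → z - 1 ≠ B (r + 1) → z + 1 ≠ A (r + 1) → z + 1 ≠ B (r + 1) →
      (z - 1 ≤ A r ∧ A r ≤ z ↔ ¬(z - 1 ≤ B r ∧ B r ≤ z)) := by
    intro z hz hz2 hzr h1 h2 h3 h4
    have h5 := hcount (z - 1) (z + 1) (by simp; omega) (by simp; omega) (by omega) (by omega)
    have h6 := card_filter_zeroArray (A := A) (B := B) (l := z - 1) (u := z + 1 - 1)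
      (show A r ≠ B r by omega) (by omega) (by omega) (show r ≤ n - 1 by omega)
    split_ifs at h6 <;> omega
  have := hadjacent_ones (A r) (Or.inl rfl)
  have := hadjacent_ones (B r) (Or.inr rfl)
  have := hisolated_zero (A (r + 1)) (Or.inl rfl)
  have := hisolated_zero (B (r + 1)) (Or.inr rfl)
  omega

lemma zeroArray_last (hAB : RowBounds n A B) (hd : zeroArray n A B ∈ Dset n) (hn : 3 ≤ n) :
    A (n - 1) = B (n - 1) + 1 := by
  have hb := hAB (n - 1) (by omega) le_rfl
  by_contra hne
  have hone : zeroArray n A B (n - 1) (B (n - 1) + 1) = true := by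
    rw [zeroArray_eq_true]
    omega
  have hparity := hd.2.2.2 _ hone
  have hcount := card_filter_zeroArray (A := A) (B := B) (l := 1) (u := B (n - 1) + 1)
    (show A (n - 1) ≠ B (n - 1) by omega) le_rfl (by omega) le_rfl
  split_ifs at hcount <;> omega

lemma isDoublePathProfile (hAB : RowBounds n A B) (hd : zeroArray n A B ∈ Dset n)
    (hn : 3 ≤ n) : IsDoublePathProfile n A B := by
  have h1 := hAB 1 le_rfl (by omega)
  have hstep : ∀ r, 1 ≤ r → r + 1 ≤ n - 1 →
      (A (r + 1) = A r ∨ A (r + 1) = A r + 1) ∧ (B (r + 1) = B r ∨ B (r + 1) = B r + 1) := by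
    intro r hr hrn
    by_cases hr3 : 3 ≤ r
    · exact hAB.zeroArray_step hd hr3 hrn
    have h2 := hAB 2 (by omega) (by omega)
    obtain rfl | rfl : r = 1 ∨ r = 2 := by omega
    · simp only [Nat.reduceAdd]
      omega
    · have := hAB 3 (by omega) hrn
      simp only [Nat.reduceAdd]
      omega
  exact ⟨⟨by omega, fun r hr hrn => (hstep r hr hrn).1⟩,
    ⟨by omega, fun r hr hrn => (hstep r hr hrn).2⟩,
    fun r hr hrn => (hAB r (by omega) hrn).2.2.2 hr, hAB.zeroArray_last hd hn⟩

lemma eq_of_zeroArray_eq {A' B' : ℕ → ℕ} (hAB : RowBounds n A B) (hAB' : RowBounds n A' B')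
    (heq : zeroArray n A B = zeroArray n A' B') {r : ℕ} (hr : 1 ≤ r) (hrn : r ≤ n - 1) :
    A r = A' r ∧ B r = B' r := by
  have hb := hAB r hr hrn
  have hb' := hAB' r hr hrn
  have hrow : ∀ i, zeroArray n A B r i = zeroArray n A' B' r i := fun i => by rw [heq]
  have h1 := hrow (A r)
  have h2 := hrow (B r)
  have h3 := hrow (A' r)
  have h4 := hrow (B' r)
  simp only [zeroArray, decide_eq_decide] at h1 h2 h3 h4
  omega

end RowBounds

/-- The map `p ↦ d(p)` is a bijection from the set of double paths at `θ` onto `𝒟`. -/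
theorem stmt16 (n : ℕ) (hn : 4 ≤ n) :
    Set.BijOn (fun p : List (ℕ × ℕ) × List (ℕ × ℕ) => dOf n p.1 p.2)
      {p | DoublePathAt n (1, n) p.1 p.2} (Dset n) := by
  refine ⟨?_, ?_, ?_⟩
  · rintro ⟨P1, P2⟩ hp
    obtain ⟨A, B, h, rfl, rfl⟩ := (doublePathAt_top_iff (by omega)).1 hp
    simpa only [dOf_rowPath] using h.zeroArray_mem_Dset
  · rintro ⟨P1, P2⟩ hp ⟨Q1, Q2⟩ hq heq
    obtain ⟨A, B, h, rfl, rfl⟩ := (doublePathAt_top_iff (by omega)).1 hp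
    obtain ⟨A', B', h', rfl, rfl⟩ := (doublePathAt_top_iff (by omega)).1 hq
    simp only [dOf_rowPath] at heq
    have hrows : ∀ r, 1 ≤ r → r ≤ n - 1 → A r = A' r ∧ B r = B' r := fun _ hr hrn =>
      h.rowBounds.eq_of_zeroArray_eq h'.rowBounds heq hr hrn
    rw [rowPath_congr fun r hr hrn => (hrows r hr hrn).1,
      rowPath_congr fun r hr hrn => (hrows r hr hrn).2]
  · intro d hd
    obtain ⟨A, B, hAB, rfl⟩ := exists_zeroArray_eq_of_mem_Dset hd
    exact ⟨(rowPath n A, rowPath n B),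
      (doublePathAt_top_iff (by omega)).2 ⟨A, B, hAB.isDoublePathProfile hd (by omega), rfl, rfl⟩,
      dOf_rowPath A B⟩
end
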